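/- arXiv:1607.04021 — 7 statements merged into one kernel-verified Lean document; each statement's English description precedes it below -/
import Mathlib

section
/- Let n₁ < n₂ be positive integers and let α₁, α₂, γ₁, γ₂ be nonzero reals such that u = α₁·e_{n₁} + α₂·e_{n₂} and v = γ₁·e_{n₁} + γ₂·e_{n₂} form a solution of the double-beam system. If at least one of the following holds: |α₁| = |γ₁|, or |α₂| = |γ₂|, or α₁·α₂ = γ₁·γ₂, or α₁·α₂ = −γ₁·γ₂, or α₁·γ₂ = α₂·γ₁, then ∫₀¹ u'(s)² ds = ∫₀¹ v'(s)² ds. -/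
open Real Set

lemma int_cos' (c : ℝ) (hc : c ≠ 0) : ∫ x in (0:ℝ)..1, Real.cos (c*x) = Real.sin c / c := by
  rw [intervalIntegral.integral_comp_mul_left (fun x => Real.cos x) hc]
  simp [integral_cos, div_eq_inv_mul]
lemma sin_orth (m l : ℕ) (hm : 0 < m) (hl : 0 < l) :
    ∫ x in (0:ℝ)..1, Real.sin ((m:ℝ)*π*x) * Real.sin ((l:ℝ)*π*x)
      = if m = l then 1/2 else 0 := by
  have key : ∀ x:ℝ, Real.sin ((m:ℝ)*π*x) * Real.sin ((l:ℝ)*π*x)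
      = (Real.cos ((((m:ℝ)-l)*π)*x) - Real.cos ((((m:ℝ)+l)*π)*x))/2 := by
    intro x
    rw [show (((m:ℝ)-l)*π)*x = (m:ℝ)*π*x - (l:ℝ)*π*x by ring,
        show (((m:ℝ)+l)*π)*x = (m:ℝ)*π*x + (l:ℝ)*π*x by ring,
        Real.cos_sub, Real.cos_add]
    ring
  rw [intervalIntegral.integral_congr (g := fun x =>
      (Real.cos ((((m:ℝ)-l)*π)*x) - Real.cos ((((m:ℝ)+l)*π)*x))/2) (fun x _ => key x)]
  rw [intervalIntegral.integral_div,
    intervalIntegral.integral_sub (Continuous.intervalIntegrable (by continuity) _ _)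
      (Continuous.intervalIntegrable (by continuity) _ _)]
  have hsum : ∫ x in (0:ℝ)..1, Real.cos ((((m:ℝ)+l)*π)*x) = 0 := by
    rw [int_cos' _ (by positivity)]
    have h0 := Real.sin_nat_mul_pi (m+l)
    push_cast at h0
    rw [h0]; simp
  by_cases h : m = l
  · subst h
    simp only [sub_self, zero_mul, Real.cos_zero, hsum]
    simp
  · have hne : ((m:ℝ) - l) ≠ 0 := sub_ne_zero.mpr (by exact_mod_cast h)
    have hdiff : ∫ x in (0:ℝ)..1, Real.cos ((((m:ℝ)-l)*π)*x) = 0 := by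
      rw [int_cos' _ (mul_ne_zero hne Real.pi_ne_zero)]
      have h0 := Real.sin_int_mul_pi ((m:ℤ)-(l:ℤ))
      push_cast at h0
      rw [h0]; simp
    rw [hdiff, hsum, if_neg h]; simp
lemma deriv_sinsum (a₁ a₂ c₁ c₂ : ℝ) :
    deriv (fun x => a₁ * Real.sin (c₁*x) + a₂ * Real.sin (c₂*x)) =
      fun x => a₁*c₁ * Real.cos (c₁*x) + a₂*c₂ * Real.cos (c₂*x) := by
  funext x
  have d1 : HasDerivAt (fun x:ℝ => a₁ * Real.sin (c₁*x)) (a₁*c₁ * Real.cos (c₁*x)) x := by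
    have := ((Real.hasDerivAt_sin (c₁*x)).comp x ((hasDerivAt_id x).const_mul c₁)).const_mul a₁
    exact this.congr_deriv (by ring)
  have d2 : HasDerivAt (fun x:ℝ => a₂ * Real.sin (c₂*x)) (a₂*c₂ * Real.cos (c₂*x)) x := by
    have := ((Real.hasDerivAt_sin (c₂*x)).comp x ((hasDerivAt_id x).const_mul c₂)).const_mul a₂
    exact this.congr_deriv (by ring)
  exact (d1.add d2).deriv

lemma deriv_cossum (a₁ a₂ c₁ c₂ : ℝ) :
    deriv (fun x => a₁ * Real.cos (c₁*x) + a₂ * Real.cos (c₂*x)) =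
      fun x => (-(a₁*c₁)) * Real.sin (c₁*x) + (-(a₂*c₂)) * Real.sin (c₂*x) := by
  funext x
  have d1 : HasDerivAt (fun x:ℝ => a₁ * Real.cos (c₁*x)) ((-(a₁*c₁)) * Real.sin (c₁*x)) x := by
    have := ((Real.hasDerivAt_cos (c₁*x)).comp x ((hasDerivAt_id x).const_mul c₁)).const_mul a₁
    exact this.congr_deriv (by ring)
  have d2 : HasDerivAt (fun x:ℝ => a₂ * Real.cos (c₂*x)) ((-(a₂*c₂)) * Real.sin (c₂*x)) x := by
    have := ((Real.hasDerivAt_cos (c₂*x)).comp x ((hasDerivAt_id x).const_mul c₂)).const_mul a₂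
    exact this.congr_deriv (by ring)
  exact (d1.add d2).deriv

lemma iter2 (a₁ a₂ c₁ c₂ : ℝ) :
    iteratedDeriv 2 (fun x => a₁ * Real.sin (c₁*x) + a₂ * Real.sin (c₂*x)) =
      fun x => (-(a₁*c₁^2)) * Real.sin (c₁*x) + (-(a₂*c₂^2)) * Real.sin (c₂*x) := by
  rw [show (2:ℕ) = 1+1 from rfl, iteratedDeriv_succ, iteratedDeriv_one, deriv_sinsum, deriv_cossum]
  funext x; ring

lemma iter4 (a₁ a₂ c₁ c₂ : ℝ) :
    iteratedDeriv 4 (fun x => a₁ * Real.sin (c₁*x) + a₂ * Real.sin (c₂*x)) =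
      fun x => (a₁*c₁^4) * Real.sin (c₁*x) + (a₂*c₂^4) * Real.sin (c₂*x) := by
  rw [show (4:ℕ) = 2+1+1 from rfl, iteratedDeriv_succ, iteratedDeriv_succ, iter2,
    deriv_sinsum, deriv_cossum]
  funext x; ring
lemma coeff_zero (P Q : ℝ) (m l : ℕ) (hm : 0 < m) (hl : 0 < l) (hml : m ≠ l)
    (h : ∀ x ∈ Icc (0:ℝ) 1, P * Real.sin ((m:ℝ)*π*x) + Q * Real.sin ((l:ℝ)*π*x) = 0) :
    P = 0 ∧ Q = 0 := by
  have expand : ∀ j : ℕ, 0 < j →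
      P * (∫ x in (0:ℝ)..1, Real.sin ((m:ℝ)*π*x) * Real.sin ((j:ℝ)*π*x))
      + Q * (∫ x in (0:ℝ)..1, Real.sin ((l:ℝ)*π*x) * Real.sin ((j:ℝ)*π*x)) = 0 := by
    intro j hj
    have hzero : (∫ x in (0:ℝ)..1,
        (P * Real.sin ((m:ℝ)*π*x) + Q * Real.sin ((l:ℝ)*π*x)) * Real.sin ((j:ℝ)*π*x)) = 0 := by
      rw [intervalIntegral.integral_congr (g := fun _ => (0:ℝ))]
      · simp
      · intro x hx
        rw [Set.uIcc_of_le (by norm_num : (0:ℝ) ≤ 1)] at hx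
        simp [h x hx]
    have hptw : ∀ x:ℝ, (P * Real.sin ((m:ℝ)*π*x) + Q * Real.sin ((l:ℝ)*π*x)) * Real.sin ((j:ℝ)*π*x)
        = P * (Real.sin ((m:ℝ)*π*x) * Real.sin ((j:ℝ)*π*x))
          + Q * (Real.sin ((l:ℝ)*π*x) * Real.sin ((j:ℝ)*π*x)) := fun x => by ring
    have csin : ∀ a:ℕ, Continuous (fun x:ℝ => Real.sin ((a:ℝ)*π*x)) :=
      fun a => Real.continuous_sin.comp (continuous_const.mul continuous_id)
    have hsplit : (∫ x in (0:ℝ)..1,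
        (P * Real.sin ((m:ℝ)*π*x) + Q * Real.sin ((l:ℝ)*π*x)) * Real.sin ((j:ℝ)*π*x))
        = P * (∫ x in (0:ℝ)..1, Real.sin ((m:ℝ)*π*x) * Real.sin ((j:ℝ)*π*x))
          + Q * (∫ x in (0:ℝ)..1, Real.sin ((l:ℝ)*π*x) * Real.sin ((j:ℝ)*π*x)) := by
      rw [intervalIntegral.integral_congr (g :=
        fun x => P * (Real.sin ((m:ℝ)*π*x) * Real.sin ((j:ℝ)*π*x))
          + Q * (Real.sin ((l:ℝ)*π*x) * Real.sin ((j:ℝ)*π*x))) (fun x _ => hptw x)]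
      rw [intervalIntegral.integral_add (f := fun x => P * (Real.sin ((m:ℝ)*π*x) * Real.sin ((j:ℝ)*π*x)))
          (g := fun x => Q * (Real.sin ((l:ℝ)*π*x) * Real.sin ((j:ℝ)*π*x)))
          ((continuous_const.mul ((csin m).mul (csin j))).intervalIntegrable _ _)
          ((continuous_const.mul ((csin l).mul (csin j))).intervalIntegrable _ _),
        intervalIntegral.integral_const_mul, intervalIntegral.integral_const_mul]
    rw [hsplit] at hzero
    exact hzero
  have h1 := expand m hm
  have h2 := expand l hl
  rw [sin_orth m m hm hm, sin_orth l m hl hm, if_pos rfl, if_neg (Ne.symm hml)] at h1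
  rw [sin_orth m l hm hl, sin_orth l l hl hl, if_pos rfl, if_neg hml] at h2
  constructor <;> linarith
lemma alg_key (k c d L1 L2 α₁ α₂ γ₁ γ₂ : ℝ) (hk : 0 < k) (hL1 : 0 < L1) (hL12 : L1 < L2)
    (hα₁ : α₁ ≠ 0) (hα₂ : α₂ ≠ 0) (hγ₁ : γ₁ ≠ 0) (hγ₂ : γ₂ ≠ 0)
    (e1 : α₁*L1^2 + c*(α₁*L1) + k*(α₁-γ₁) = 0)
    (e2 : α₂*L2^2 + c*(α₂*L2) + k*(α₂-γ₂) = 0)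
    (e3 : γ₁*L1^2 + d*(γ₁*L1) - k*(α₁-γ₁) = 0)
    (e4 : γ₂*L2^2 + d*(γ₂*L2) - k*(α₂-γ₂) = 0)
    (hcase : |α₁| = |γ₁| ∨ |α₂| = |γ₂| ∨ α₁ * α₂ = γ₁ * γ₂ ∨
      α₁ * α₂ = -(γ₁ * γ₂) ∨ α₁ * γ₂ = α₂ * γ₁) :
    c = d := by
  have h1 : α₁*(L1^2+c*L1+k) = k*γ₁ := by linear_combination e1
  have h2 : α₂*(L2^2+c*L2+k) = k*γ₂ := by linear_combination e2
  have h3 : γ₁*(L1^2+d*L1+k) = k*α₁ := by linear_combination e3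
  have h4 : γ₂*(L2^2+d*L2+k) = k*α₂ := by linear_combination e4
  have PA : (L1^2+c*L1+k)*(L1^2+d*L1+k) = k^2 := by
    apply mul_left_cancel₀ (mul_ne_zero hα₁ hγ₁)
    linear_combination (γ₁*(L1^2+d*L1+k))*h1 + (k*γ₁)*h3
  have PB : (L2^2+c*L2+k)*(L2^2+d*L2+k) = k^2 := by
    apply mul_left_cancel₀ (mul_ne_zero hα₂ hγ₂)
    linear_combination (γ₂*(L2^2+d*L2+k))*h2 + (k*γ₂)*h4
  have hk2 : (k:ℝ)^2 ≠ 0 := pow_ne_zero 2 hk.ne'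
  have hPA0 : (L1^2+c*L1+k)*(L1^2+d*L1+k) ≠ 0 := PA ▸ hk2
  have hXc : L1^2+c*L1+k ≠ 0 := left_ne_zero_of_mul hPA0
  have hXd : L1^2+d*L1+k ≠ 0 := right_ne_zero_of_mul hPA0
  have hPB0 : (L2^2+c*L2+k)*(L2^2+d*L2+k) ≠ 0 := PB ▸ hk2
  have hYc : L2^2+c*L2+k ≠ 0 := left_ne_zero_of_mul hPB0
  have hYd : L2^2+d*L2+k ≠ 0 := right_ne_zero_of_mul hPB0
  have hL2 : 0 < L2 := hL1.trans hL12
  rcases hcase with h | h | h | h | h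
  · -- |α₁| = |γ₁|
    have hsq : α₁^2 = γ₁^2 := by rw [← sq_abs α₁, ← sq_abs γ₁, h]
    have R1 : α₁*γ₁*L1*(c-d) = 0 := by linear_combination γ₁*e1 - α₁*e3 - k*hsq
    have := (mul_eq_zero.mp R1).resolve_left
      (mul_ne_zero (mul_ne_zero hα₁ hγ₁) hL1.ne')
    linarith
  · have hsq : α₂^2 = γ₂^2 := by rw [← sq_abs α₂, ← sq_abs γ₂, h]
    have R2 : α₂*γ₂*L2*(c-d) = 0 := by linear_combination γ₂*e2 - α₂*e4 - k*hsq
    have := (mul_eq_zero.mp R2).resolve_left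
      (mul_ne_zero (mul_ne_zero hα₂ hγ₂) hL2.ne')
    linarith
  · -- α₁α₂ = γ₁γ₂
    have QC : (L1^2+c*L1+k)*(L2^2+c*L2+k) = k^2 := by
      apply mul_left_cancel₀ (mul_ne_zero hα₁ hα₂)
      linear_combination (α₂*(L2^2+c*L2+k))*h1 + (k*γ₁)*h2 - k^2*h
    have QD : (L1^2+d*L1+k)*(L2^2+d*L2+k) = k^2 := by
      apply mul_left_cancel₀ (mul_ne_zero hγ₁ hγ₂)
      linear_combination (γ₂*(L2^2+d*L2+k))*h3 + (k*α₁)*h4 + k^2*h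
    have r1 : L2^2+c*L2+k = L1^2+d*L1+k := mul_left_cancel₀ hXc (by linear_combination QC - PA)
    have r2 : L2^2+d*L2+k = L1^2+c*L1+k := mul_left_cancel₀ hXd (by
      linear_combination QD - PA)
    have hz : (c-d)*(L1+L2) = 0 := by linear_combination r1 - r2
    have := (mul_eq_zero.mp hz).resolve_right (by positivity)
    linarith
  · -- α₁α₂ = -γ₁γ₂
    have QC : (L1^2+c*L1+k)*(L2^2+c*L2+k) = -k^2 := by
      apply mul_left_cancel₀ (mul_ne_zero hα₁ hα₂)
      linear_combination (α₂*(L2^2+c*L2+k))*h1 + (k*γ₁)*h2 + k^2*h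
    have QD : (L1^2+d*L1+k)*(L2^2+d*L2+k) = -k^2 := by
      apply mul_left_cancel₀ (mul_ne_zero hγ₁ hγ₂)
      linear_combination (γ₂*(L2^2+d*L2+k))*h3 + (k*α₁)*h4 + k^2*h
    have r1 : L2^2+c*L2+k = -(L1^2+d*L1+k) := mul_left_cancel₀ hXc (by
      linear_combination QC + PA)
    have r2 : L2^2+d*L2+k = -(L1^2+c*L1+k) := mul_left_cancel₀ hXd (by
      linear_combination QD + PA)
    have hz : (c-d)*(L2-L1) = 0 := by linear_combination r1 - r2
    have := (mul_eq_zero.mp hz).resolve_right (by linarith : L2 - L1 ≠ 0)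
    linarith
  · -- α₁γ₂ = α₂γ₁
    have S1 : (L1^2+c*L1+k)*(L2^2+d*L2+k) = k^2 := by
      apply mul_left_cancel₀ (mul_ne_zero hα₁ hγ₂)
      linear_combination (γ₂*(L2^2+d*L2+k))*h1 + (k*γ₁)*h4 - k^2*h
    have S2 : (L1^2+d*L1+k)*(L2^2+c*L2+k) = k^2 := by
      apply mul_left_cancel₀ (mul_ne_zero hα₂ hγ₁)
      linear_combination (α₂*(L2^2+c*L2+k))*h3 + (k*α₁)*h2 + k^2*h
    have r1 : L2^2+d*L2+k = L1^2+d*L1+k := mul_left_cancel₀ hXc (by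
      linear_combination S1 - PA)
    have r2 : L2^2+c*L2+k = L1^2+c*L1+k := mul_left_cancel₀ hXd (by
      linear_combination S2 - PA)
    have hz1 : (L2-L1)*(L2+L1+d) = 0 := by linear_combination r1
    have hz2 : (L2-L1)*(L2+L1+c) = 0 := by linear_combination r2
    have hd0 := (mul_eq_zero.mp hz1).resolve_left (by linarith : L2 - L1 ≠ 0)
    have hc0 := (mul_eq_zero.mp hz2).resolve_left (by linarith : L2 - L1 ≠ 0)
    linarith

noncomputable def ee (n : ℕ) : ℝ → ℝ := fun x => Real.sqrt 2 * Real.sin (n * Real.pi * x)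

noncomputable def lam (n : ℕ) : ℝ := (n : ℝ) ^ 2 * Real.pi ^ 2

noncomputable def energy (u : ℝ → ℝ) : ℝ := ∫ s in (0:ℝ)..1, (deriv u s) ^ 2

/-- `(u, v)` is a solution of the double-beam system with parameters `β ϱ k`. -/
def DBSol (β ϱ k : ℝ) (u v : ℝ → ℝ) : Prop :=
  ContDiff ℝ 4 u ∧ ContDiff ℝ 4 v ∧
  (∀ x ∈ Set.Icc (0:ℝ) 1,
    iteratedDeriv 4 u x - (β + ϱ * energy u) * iteratedDeriv 2 u x + k * (u x - v x) = 0) ∧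
  (∀ x ∈ Set.Icc (0:ℝ) 1,
    iteratedDeriv 4 v x - (β + ϱ * energy v) * iteratedDeriv 2 v x - k * (u x - v x) = 0) ∧
  u 0 = 0 ∧ u 1 = 0 ∧ iteratedDeriv 2 u 0 = 0 ∧ iteratedDeriv 2 u 1 = 0 ∧
  v 0 = 0 ∧ v 1 = 0 ∧ iteratedDeriv 2 v 0 = 0 ∧ iteratedDeriv 2 v 1 = 0

theorem stmt11 (β ϱ k : ℝ) (hϱ : 0 < ϱ) (hk : 0 < k)
    (n₁ n₂ : ℕ) (hn₁ : 0 < n₁) (hlt : n₁ < n₂)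
    (α₁ α₂ γ₁ γ₂ : ℝ) (hα₁ : α₁ ≠ 0) (hα₂ : α₂ ≠ 0) (hγ₁ : γ₁ ≠ 0) (hγ₂ : γ₂ ≠ 0)
    (u v : ℝ → ℝ)
    (hu : u = fun t => α₁ * ee n₁ t + α₂ * ee n₂ t)
    (hv : v = fun t => γ₁ * ee n₁ t + γ₂ * ee n₂ t)
    (hsol : DBSol β ϱ k u v)
    (hcase : |α₁| = |γ₁| ∨ |α₂| = |γ₂| ∨ α₁ * α₂ = γ₁ * γ₂ ∨
      α₁ * α₂ = -(γ₁ * γ₂) ∨ α₁ * γ₂ = α₂ * γ₁) :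
    energy u = energy v := by
  obtain ⟨-, -, hequ, heqv, -⟩ := hsol
  have hπ := Real.pi_pos
  have hn₂ : 0 < n₂ := hn₁.trans hlt
  have hne : n₁ ≠ n₂ := Nat.ne_of_lt hlt
  set c := β + ϱ * energy u with hcdef
  set d := β + ϱ * energy v with hddef
  have hufun : u = fun x => (α₁*Real.sqrt 2) * Real.sin ((n₁:ℝ)*π*x)
      + (α₂*Real.sqrt 2) * Real.sin ((n₂:ℝ)*π*x) := by
    rw [hu]; funext x; simp only [ee]; ring
  have hvfun : v = fun x => (γ₁*Real.sqrt 2) * Real.sin ((n₁:ℝ)*π*x)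
      + (γ₂*Real.sqrt 2) * Real.sin ((n₂:ℝ)*π*x) := by
    rw [hv]; funext x; simp only [ee]; ring
  have h2u := iter2 (α₁*Real.sqrt 2) (α₂*Real.sqrt 2) ((n₁:ℝ)*π) ((n₂:ℝ)*π)
  have h4u := iter4 (α₁*Real.sqrt 2) (α₂*Real.sqrt 2) ((n₁:ℝ)*π) ((n₂:ℝ)*π)
  have h2v := iter2 (γ₁*Real.sqrt 2) (γ₂*Real.sqrt 2) ((n₁:ℝ)*π) ((n₂:ℝ)*π)
  have h4v := iter4 (γ₁*Real.sqrt 2) (γ₂*Real.sqrt 2) ((n₁:ℝ)*π) ((n₂:ℝ)*π)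
  have keyu : ∀ x ∈ Icc (0:ℝ) 1,
      (Real.sqrt 2*(α₁*((n₁:ℝ)*π)^4 + c*(α₁*((n₁:ℝ)*π)^2) + k*(α₁-γ₁))) * Real.sin ((n₁:ℝ)*π*x)
      + (Real.sqrt 2*(α₂*((n₂:ℝ)*π)^4 + c*(α₂*((n₂:ℝ)*π)^2) + k*(α₂-γ₂))) * Real.sin ((n₂:ℝ)*π*x)
        = 0 := by
    intro x hx
    have h0 := hequ x hx
    rw [hufun, hvfun] at h0
    rw [h2u, h4u] at h0
    simp only at h0
    linear_combination h0
  have keyv : ∀ x ∈ Icc (0:ℝ) 1,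
      (Real.sqrt 2*(γ₁*((n₁:ℝ)*π)^4 + d*(γ₁*((n₁:ℝ)*π)^2) - k*(α₁-γ₁))) * Real.sin ((n₁:ℝ)*π*x)
      + (Real.sqrt 2*(γ₂*((n₂:ℝ)*π)^4 + d*(γ₂*((n₂:ℝ)*π)^2) - k*(α₂-γ₂))) * Real.sin ((n₂:ℝ)*π*x)
        = 0 := by
    intro x hx
    have h0 := heqv x hx
    rw [hufun, hvfun] at h0
    rw [h2v, h4v] at h0
    simp only at h0
    linear_combination h0
  obtain ⟨hP₁, hQ₁⟩ := coeff_zero _ _ n₁ n₂ hn₁ hn₂ hne keyu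
  obtain ⟨hP₂, hQ₂⟩ := coeff_zero _ _ n₁ n₂ hn₁ hn₂ hne keyv
  have hs2 : Real.sqrt 2 ≠ 0 := by positivity
  have e1 := (mul_eq_zero.mp hP₁).resolve_left hs2
  have e2 := (mul_eq_zero.mp hQ₁).resolve_left hs2
  have e3 := (mul_eq_zero.mp hP₂).resolve_left hs2
  have e4 := (mul_eq_zero.mp hQ₂).resolve_left hs2
  have hL1 : (0:ℝ) < ((n₁:ℝ)*π)^2 := by positivity
  have hcast : (n₁:ℝ) < (n₂:ℝ) := by exact_mod_cast hlt
  have hn₁0 : (0:ℝ) ≤ (n₁:ℝ) := n₁.cast_nonneg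
  have hL12 : ((n₁:ℝ)*π)^2 < ((n₂:ℝ)*π)^2 := by
    have hπ2 : (0:ℝ) < π^2 := by positivity
    have hsq : (n₁:ℝ)^2 < (n₂:ℝ)^2 := by nlinarith
    calc ((n₁:ℝ)*π)^2 = (n₁:ℝ)^2*π^2 := by ring
      _ < (n₂:ℝ)^2*π^2 := mul_lt_mul_of_pos_right hsq hπ2
      _ = ((n₂:ℝ)*π)^2 := by ring
  have hcd : c = d := by
    apply alg_key k c d (((n₁:ℝ)*π)^2) (((n₂:ℝ)*π)^2) α₁ α₂ γ₁ γ₂ hk hL1 hL12 hα₁ hα₂ hγ₁ hγ₂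
    · linear_combination e1
    · linear_combination e2
    · linear_combination e3
    · linear_combination e4
    · exact hcase
  rw [hcdef, hddef] at hcd
  have := mul_left_cancel₀ hϱ.ne' (show ϱ * energy u = ϱ * energy v by linarith)
  exact this
end

section
/- The following three statements are equivalent: (i) Φ² ≥ 4; (ii) Ψ² ≥ 4; (iii) λ₁·λ₂ ≤ 2k or λ₁·(λ₂ − λ₁) ≥ 2k. -/
set_option maxHeartbeats 800000


theorem stmt12 (k l₁ l₂ : ℝ) (hk : 0 < k) (h1 : 0 < l₁) (h12 : l₁ < l₂)
    (hne : l₁ * l₂ ≠ k)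
    (ζ σ Φ Ψ : ℝ) (hζ : ζ = l₂ / l₁) (hσ : σ = (k - l₁ * l₂) / k)
    (hΦ : Φ = ((ζ + 1) + (ζ - 1) * σ ^ 2) / (σ * ζ))
    (hΨ : Ψ = ((ζ + 1) - (ζ - 1) * σ ^ 2) / σ) :
    (Φ ^ 2 ≥ 4 ↔ Ψ ^ 2 ≥ 4) ∧
    (Ψ ^ 2 ≥ 4 ↔ (l₁ * l₂ ≤ 2 * k ∨ l₁ * (l₂ - l₁) ≥ 2 * k)) := by
  have hl1 : l₁ ≠ 0 := ne_of_gt h1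
  have hk' : k ≠ 0 := ne_of_gt hk
  have hd : k - l₁ * l₂ ≠ 0 := sub_ne_zero.mpr hne.symm
  have h2 : 0 < l₂ := lt_trans h1 h12
  have hζpos : 0 < ζ := by rw [hζ]; positivity
  have hσne : σ ≠ 0 := by rw [hσ]; exact div_ne_zero hd hk'
  have hkey1 : Φ ^ 2 - 4 = (Ψ ^ 2 - 4) / ζ ^ 2 := by
    subst hΦ hΨ
    field_simp
    ring
  have hkey2 : (Ψ ^ 2 - 4) * (l₁ ^ 2 * k ^ 2 * (k - l₁ * l₂) ^ 2) =
      (l₁ * l₂) * (l₁ * l₂ - 2 * k) * (2 * l₁ * k + l₁ * l₂ * (l₂ - l₁)) *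
        (l₁ * l₂ * (l₂ - l₁) - 2 * l₂ * k) := by
    subst hΨ hσ hζ
    have hd' : k - l₂ * l₁ ≠ 0 := by rwa [mul_comm l₂ l₁]
    field_simp
    ring
  have hden : 0 < l₁ ^ 2 * k ^ 2 * (k - l₁ * l₂) ^ 2 := by positivity
  have hC : 0 < 2 * l₁ * k + l₁ * l₂ * (l₂ - l₁) := by
    have := mul_pos (mul_pos h1 h2) (sub_pos.mpr h12)
    nlinarith [mul_pos h1 hk]
  constructor
  · constructor
    · intro h
      have h2' : Ψ ^ 2 - 4 = (Φ ^ 2 - 4) * ζ ^ 2 := by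
        field_simp at hkey1 ⊢
        linarith [hkey1]
      nlinarith [sq_nonneg ζ]
    · intro h
      have hdiv : (Ψ ^ 2 - 4) / ζ ^ 2 ≥ 0 := div_nonneg (by linarith) (by positivity)
      linarith [hkey1, hdiv]
  · constructor
    · intro h
      by_contra hc
      push_neg at hc
      obtain ⟨ha, hb⟩ := hc
      have hN : (l₁ * l₂) * (l₁ * l₂ - 2 * k) * (2 * l₁ * k + l₁ * l₂ * (l₂ - l₁)) *
          (l₁ * l₂ * (l₂ - l₁) - 2 * l₂ * k) ≥ 0 := by
        rw [← hkey2]; exact mul_nonneg (by linarith) hden.le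
      have hB : l₁ * l₂ * (l₂ - l₁) - 2 * l₂ * k < 0 := by
        nlinarith [mul_lt_mul_of_pos_left hb h2]
      have hpos : 0 < l₁ * l₂ * (l₁ * l₂ - 2 * k) * (2 * l₁ * k + l₁ * l₂ * (l₂ - l₁)) :=
        mul_pos (mul_pos (mul_pos h1 h2) (by linarith)) hC
      have := mul_neg_of_pos_of_neg hpos hB
      linarith
    · intro h
      have hN : 0 ≤ (l₁ * l₂) * (l₁ * l₂ - 2 * k) * (2 * l₁ * k + l₁ * l₂ * (l₂ - l₁)) *
          (l₁ * l₂ * (l₂ - l₁) - 2 * l₂ * k) := by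
        rcases h with h | h
        · have hA : l₁ * l₂ - 2 * k ≤ 0 := by linarith
          have hB : l₁ * l₂ * (l₂ - l₁) - 2 * l₂ * k < 0 := by
            nlinarith [mul_le_mul_of_nonneg_right h (sub_pos.mpr h12).le, mul_pos hk h1]
          have hre : (l₁ * l₂) * (l₁ * l₂ - 2 * k) * (2 * l₁ * k + l₁ * l₂ * (l₂ - l₁)) *
              (l₁ * l₂ * (l₂ - l₁) - 2 * l₂ * k) =
              ((l₁ * l₂) * (2 * l₁ * k + l₁ * l₂ * (l₂ - l₁))) *
                ((l₁ * l₂ - 2 * k) * (l₁ * l₂ * (l₂ - l₁) - 2 * l₂ * k)) := by ring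
          rw [hre]
          exact mul_nonneg (mul_pos (mul_pos h1 h2) hC).le
            (by have := mul_nonneg (neg_nonneg.mpr hA) (neg_nonneg.mpr hB.le)
                rwa [neg_mul_neg] at this)
        · have hA : 0 ≤ l₁ * l₂ - 2 * k := by nlinarith [mul_pos h1 h1]
          have hB : 0 ≤ l₁ * l₂ * (l₂ - l₁) - 2 * l₂ * k := by
            nlinarith [mul_le_mul_of_nonneg_left h h2.le]
          have hre : (l₁ * l₂) * (l₁ * l₂ - 2 * k) * (2 * l₁ * k + l₁ * l₂ * (l₂ - l₁)) *
              (l₁ * l₂ * (l₂ - l₁) - 2 * l₂ * k) =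
              ((l₁ * l₂) * (2 * l₁ * k + l₁ * l₂ * (l₂ - l₁))) *
                ((l₁ * l₂ - 2 * k) * (l₁ * l₂ * (l₂ - l₁) - 2 * l₂ * k)) := by ring
          rw [hre]
          exact mul_nonneg (mul_pos (mul_pos h1 h2) hC).le (mul_nonneg hA hB)
      have h9 : 0 ≤ (Ψ ^ 2 - 4) * (l₁ ^ 2 * k ^ 2 * (k - l₁ * l₂) ^ 2) := by
        rw [hkey2]; exact hN
      by_contra hlt
      push_neg at hlt
      have := mul_neg_of_neg_of_pos (by linarith : Ψ ^ 2 - 4 < 0) hden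
      linarith
end

section
/- The following three statements are equivalent: (i) Φ² = 4; (ii) Ψ² = 4; (iii) λ₁·λ₂ = 2k or λ₁·(λ₂ − λ₁) = 2k. -/
theorem stmt13 (k l₁ l₂ : ℝ) (hk : 0 < k) (h1 : 0 < l₁) (h12 : l₁ < l₂)
    (hne : l₁ * l₂ ≠ k)
    (ζ σ Φ Ψ : ℝ) (hζ : ζ = l₂ / l₁) (hσ : σ = (k - l₁ * l₂) / k)
    (hΦ : Φ = ((ζ + 1) + (ζ - 1) * σ ^ 2) / (σ * ζ))
    (hΨ : Ψ = ((ζ + 1) - (ζ - 1) * σ ^ 2) / σ) :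
    (Φ ^ 2 = 4 ↔ Ψ ^ 2 = 4) ∧
    (Ψ ^ 2 = 4 ↔ (l₁ * l₂ = 2 * k ∨ l₁ * (l₂ - l₁) = 2 * k)) := by
  subst hΦ hΨ hσ hζ
  have ha : l₁ ≠ 0 := ne_of_gt h1
  have hb0 : (0:ℝ) < l₂ := lt_trans h1 h12
  have hb : l₂ ≠ 0 := ne_of_gt hb0
  have hk' : k ≠ 0 := ne_of_gt hk
  have hd : k - l₁ * l₂ ≠ 0 := sub_ne_zero_of_ne (Ne.symm hne)
  have hba : (0:ℝ) < l₂ - l₁ := sub_pos.mpr h12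
  have hZ : (0:ℝ) < 2 * k + l₂ * (l₂ - l₁) := by positivity
  have hDen : k ^ 2 * (k - l₁ * l₂) ^ 2 ≠ 0 :=
    mul_ne_zero (pow_ne_zero _ hk') (pow_ne_zero _ hd)
  have key1 : (((l₂ / l₁ + 1) + (l₂ / l₁ - 1) * ((k - l₁ * l₂) / k) ^ 2) /
      ((k - l₁ * l₂) / k * (l₂ / l₁))) ^ 2 - 4 =
      (l₁ ^ 2 * (2 * k + l₂ * (l₂ - l₁))) *
        ((2 * k - l₁ * l₂) * (2 * k - l₁ * (l₂ - l₁))) /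
        (k ^ 2 * (k - l₁ * l₂) ^ 2) := by
    obtain ⟨d, hdd⟩ : ∃ d, d = k - l₁ * l₂ := ⟨_, rfl⟩
    rw [← hdd] at hd ⊢
    field_simp
    rw [hdd]
    ring
  have key2 : (((l₂ / l₁ + 1) - (l₂ / l₁ - 1) * ((k - l₁ * l₂) / k) ^ 2) /
      ((k - l₁ * l₂) / k)) ^ 2 - 4 =
      (l₂ ^ 2 * (2 * k + l₂ * (l₂ - l₁))) *
        ((2 * k - l₁ * l₂) * (2 * k - l₁ * (l₂ - l₁))) /
        (k ^ 2 * (k - l₁ * l₂) ^ 2) := by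
    obtain ⟨d, hdd⟩ : ∃ d, d = k - l₁ * l₂ := ⟨_, rfl⟩
    rw [← hdd] at hd ⊢
    field_simp
    rw [hdd]
    ring
  have hA1 : l₁ ^ 2 * (2 * k + l₂ * (l₂ - l₁)) ≠ 0 := by positivity
  have hA2 : l₂ ^ 2 * (2 * k + l₂ * (l₂ - l₁)) ≠ 0 := by positivity
  have h1' : (((l₂ / l₁ + 1) + (l₂ / l₁ - 1) * ((k - l₁ * l₂) / k) ^ 2) /
      ((k - l₁ * l₂) / k * (l₂ / l₁))) ^ 2 = 4 ↔
      (2 * k - l₁ * l₂) * (2 * k - l₁ * (l₂ - l₁)) = 0 := by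
    rw [← sub_eq_zero, key1, div_eq_zero_iff, mul_eq_zero]
    simp [hA1, hDen]
  have h2' : (((l₂ / l₁ + 1) - (l₂ / l₁ - 1) * ((k - l₁ * l₂) / k) ^ 2) /
      ((k - l₁ * l₂) / k)) ^ 2 = 4 ↔
      (2 * k - l₁ * l₂) * (2 * k - l₁ * (l₂ - l₁)) = 0 := by
    rw [← sub_eq_zero, key2, div_eq_zero_iff, mul_eq_zero]
    simp [hA2, hDen]
  rw [h1', h2']
  refine ⟨Iff.rfl, ?_⟩
  rw [mul_eq_zero, sub_eq_zero, sub_eq_zero]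
  constructor
  · rintro (h | h)
    · exact Or.inl h.symm
    · exact Or.inr h.symm
  · rintro (h | h)
    · exact Or.inl h.symm
    · exact Or.inr h.symm
end

section
/- Assume that either k < λ₁·λ₂ < 2k or λ₁·(λ₂ − λ₁) > 2k. Then W² ≠ 1, Z² ≠ 1, X² ≠ 1, Y² ≠ 1, and the following identities hold: 𝔪 = −g − k·W²·(X − Y)/(λ₁·(W² − 1)) = −g − k·(X − Y)/(λ₁·(1 − Z²)), and 𝔐 = −g − k·X²·(X − Y)/(λ₁·(X² − 1)) = −g − k·(X − Y)/(λ₁·(1 − Y²)). -/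
set_option maxHeartbeats 2000000 in
theorem stmt14 (k l₁ l₂ : ℝ) (hk : 0 < k) (h1 : 0 < l₁) (h12 : l₁ < l₂)
    (hne : l₁ * l₂ ≠ k)
    (ζ σ Φ Ψ X Y W Z g m M : ℝ)
    (hζ : ζ = l₂ / l₁) (hσ : σ = (k - l₁ * l₂) / k)
    (hΦ : Φ = ((ζ + 1) + (ζ - 1) * σ ^ 2) / (σ * ζ))
    (hΨ : Ψ = ((ζ + 1) - (ζ - 1) * σ ^ 2) / σ)
    (hX : X = (Φ + Real.sqrt (Φ ^ 2 - 4)) / 2)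
    (hY : Y = (Φ - Real.sqrt (Φ ^ 2 - 4)) / 2)
    (hW : W = (Ψ + Real.sqrt (Ψ ^ 2 - 4)) / 2)
    (hZ : Z = (Ψ - Real.sqrt (Ψ ^ 2 - 4)) / 2)
    (hg : g = (k * Y - l₁ ^ 2 - k) / l₁)
    (hm : m = (k ^ 2 + k * l₂ * (l₂ - l₁) + l₁ ^ 2 * l₂ ^ 2) / ((l₁ * l₂ - k) * l₂))
    (hM : M = (k ^ 2 - k * l₁ * (l₂ - l₁) + l₁ ^ 2 * l₂ ^ 2) / ((l₁ * l₂ - k) * l₁))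
    (hcase : (k < l₁ * l₂ ∧ l₁ * l₂ < 2 * k) ∨ l₁ * (l₂ - l₁) > 2 * k) :
    W ^ 2 ≠ 1 ∧ Z ^ 2 ≠ 1 ∧ X ^ 2 ≠ 1 ∧ Y ^ 2 ≠ 1 ∧
    m = -g - k * W ^ 2 * (X - Y) / (l₁ * (W ^ 2 - 1)) ∧
    m = -g - k * (X - Y) / (l₁ * (1 - Z ^ 2)) ∧
    M = -g - k * X ^ 2 * (X - Y) / (l₁ * (X ^ 2 - 1)) ∧
    M = -g - k * (X - Y) / (l₁ * (1 - Y ^ 2)) := by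
  have hb : 0 < l₂ := h1.trans h12
  have ha0 : l₁ ≠ 0 := ne_of_gt h1
  have hb0 : l₂ ≠ 0 := ne_of_gt hb
  have hk0 : k ≠ 0 := ne_of_gt hk
  have hd0 : k - l₁ * l₂ ≠ 0 := sub_ne_zero.mpr (Ne.symm hne)
  have hd0' : l₁ * l₂ - k ≠ 0 := sub_ne_zero.mpr hne
  have hσ0 : σ ≠ 0 := by rw [hσ]; exact div_ne_zero hd0 hk0
  have hζpos : 0 < ζ := by rw [hζ]; positivity
  have hζ0 : ζ ≠ 0 := ne_of_gt hζpos
  have hz1 : 1 < ζ := by rw [hζ]; exact (one_lt_div h1).mpr h12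
  have hfac : Φ ^ 2 - 4 = (σ ^ 2 - 1) * ((ζ - 1) ^ 2 * σ ^ 2 - (ζ + 1) ^ 2) / (σ * ζ) ^ 2 := by
    rw [hΦ]; field_simp; ring
  have hrel : Ψ ^ 2 - 4 = ζ ^ 2 * (Φ ^ 2 - 4) := by
    rw [hΦ, hΨ]; field_simp; ring
  have hD : 0 < Φ ^ 2 - 4 := by
    rw [hfac]
    rcases hcase with ⟨hc1, hc2⟩ | hc
    · have hσlt : σ < 0 := by
        rw [hσ]; apply div_neg_of_neg_of_pos <;> linarith
      have hσgt : -1 < σ := by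
        rw [hσ, lt_div_iff₀ hk]; linarith
      have hA : σ ^ 2 - 1 < 0 := by nlinarith
      have hB : (ζ - 1) ^ 2 * σ ^ 2 - (ζ + 1) ^ 2 < 0 := by nlinarith
      exact div_pos (mul_pos_of_neg_of_neg hA hB) (by positivity)
    · have hσlt : σ < -1 := by
        have hr : l₁ * (l₂ - l₁) = l₁ * l₂ - l₁ ^ 2 := by ring
        rw [hσ, div_lt_iff₀ hk]
        linarith [sq_nonneg l₁]
      have key : ζ + 1 < (ζ - 1) * (-σ) := by
        have hlk : 0 < l₁ * k := by positivity
        rw [← mul_lt_mul_iff_of_pos_right hlk]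
        have e1 : (ζ + 1) * (l₁ * k) = (l₂ + l₁) * k := by
          rw [hζ]; field_simp
        have e2 : (ζ - 1) * (-σ) * (l₁ * k) = (l₂ - l₁) * (l₁ * l₂ - k) := by
          rw [hζ, hσ]; field_simp; ring
        rw [e1, e2]
        have hq : (l₂ - l₁) * (l₁ * l₂ - k) - (l₂ + l₁) * k
            = l₂ * (l₁ * (l₂ - l₁) - 2 * k) := by ring
        linarith [mul_pos hb (show (0:ℝ) < l₁ * (l₂ - l₁) - 2 * k by linarith), hq]
      have hA : 0 < σ ^ 2 - 1 := by
        have h' := mul_pos (show (0:ℝ) < -σ - 1 by linarith)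
          (show (0:ℝ) < -σ + 1 by linarith)
        have hq : (-σ - 1) * (-σ + 1) = σ ^ 2 - 1 := by ring
        linarith [h', hq]
      have hB : 0 < (ζ - 1) ^ 2 * σ ^ 2 - (ζ + 1) ^ 2 := by
        have f1 : 0 < (ζ - 1) * (-σ) - (ζ + 1) := by linarith
        have f2 : 0 < (ζ - 1) * (-σ) + (ζ + 1) := by linarith
        have h' := mul_pos f1 f2
        have hq : ((ζ - 1) * (-σ) - (ζ + 1)) * ((ζ - 1) * (-σ) + (ζ + 1))
            = (ζ - 1) ^ 2 * σ ^ 2 - (ζ + 1) ^ 2 := by ring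
        linarith [h', hq]
      exact div_pos (mul_pos hA hB) (by positivity)
  have hE : 0 < Ψ ^ 2 - 4 := by
    rw [hrel]; exact mul_pos (pow_pos hζpos 2) hD
  set s := Real.sqrt (Φ ^ 2 - 4) with hsdef
  set t := Real.sqrt (Ψ ^ 2 - 4) with htdef
  have hs2 : s ^ 2 = Φ ^ 2 - 4 := Real.sq_sqrt hD.le
  have ht2 : t ^ 2 = Ψ ^ 2 - 4 := Real.sq_sqrt hE.le
  have hs : 0 < s := Real.sqrt_pos.mpr hD
  have ht : 0 < t := Real.sqrt_pos.mpr hE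
  have hts : t = ζ * s := by
    rw [htdef, hrel, Real.sqrt_mul (sq_nonneg ζ), Real.sqrt_sq hζpos.le, ← hsdef]
  have hXmY : X - Y = s := by rw [hX, hY]; ring
  have hXY : X * Y = 1 := by rw [hX, hY]; linear_combination (-(1:ℝ)/4) * hs2
  have hWZ : W * Z = 1 := by rw [hW, hZ]; linear_combination (-(1:ℝ)/4) * ht2
  have hX2 : X ^ 2 - 1 = s * X := by rw [hX]; linear_combination (-(1:ℝ)/4) * hs2
  have hY2 : Y ^ 2 - 1 = -(s * Y) := by rw [hY]; linear_combination (-(1:ℝ)/4) * hs2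
  have hW2 : W ^ 2 - 1 = t * W := by rw [hW]; linear_combination (-(1:ℝ)/4) * ht2
  have hZ2 : Z ^ 2 - 1 = -(t * Z) := by rw [hZ]; linear_combination (-(1:ℝ)/4) * ht2
  have hX0 : X ≠ 0 := left_ne_zero_of_mul_eq_one hXY
  have hY0 : Y ≠ 0 := right_ne_zero_of_mul_eq_one hXY
  have hW0 : W ≠ 0 := left_ne_zero_of_mul_eq_one hWZ
  have hZ0 : Z ≠ 0 := right_ne_zero_of_mul_eq_one hWZ
  have hXn : X ^ 2 ≠ 1 := by
    intro h
    exact mul_ne_zero hs.ne' hX0 (by rw [← hX2, h, sub_self])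
  have hYn : Y ^ 2 ≠ 1 := by
    intro h
    have : -(s * Y) = 0 := by rw [← hY2, h, sub_self]
    exact mul_ne_zero hs.ne' hY0 (by linarith)
  have hWn : W ^ 2 ≠ 1 := by
    intro h
    exact mul_ne_zero ht.ne' hW0 (by rw [← hW2, h, sub_self])
  have hZn : Z ^ 2 ≠ 1 := by
    intro h
    have : -(t * Z) = 0 := by rw [← hZ2, h, sub_self]
    exact mul_ne_zero ht.ne' hZ0 (by linarith)
  have hmval : m = (l₁ ^ 2 + k) / l₁ - k * (Φ / l₁ + Ψ / l₂) / 2 := by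
    rw [hm, hΦ, hΨ, hζ, hσ]; have hd2 : k - l₂ * l₁ ≠ 0 := by rwa [mul_comm l₂]
    have hd3 : l₂ * l₁ - k ≠ 0 := by rwa [mul_comm l₂]
    field_simp; ring
  have hMval : M = (l₁ ^ 2 + k - k * Φ) / l₁ := by
    rw [hM, hΦ, hζ, hσ]; field_simp; ring
  have hWinv : W = Z⁻¹ := eq_inv_of_mul_eq_one_left hWZ
  have hXinv : X = Y⁻¹ := eq_inv_of_mul_eq_one_left hXY
  have main5 : m = -g - k * W / l₂ := by
    rw [hmval, hg, hW, hY, hts, hζ]; field_simp; ring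
  have main7 : M = -g - k * X / l₁ := by
    rw [hMval, hg, hX, hY]; field_simp; ring
  have e5 : k * W ^ 2 * (X - Y) / (l₁ * (W ^ 2 - 1)) = k * W / l₂ := by
    rw [hXmY, hW2, hts, hζ]
    field_simp
  have e6 : k * (X - Y) / (l₁ * (1 - Z ^ 2)) = k * W / l₂ := by
    have h1Z : 1 - Z ^ 2 = t * Z := by linarith [hZ2]
    rw [hXmY, h1Z, hts, hζ, hWinv]
    field_simp
  have e7 : k * X ^ 2 * (X - Y) / (l₁ * (X ^ 2 - 1)) = k * X / l₁ := by
    rw [hXmY, hX2]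
    field_simp
  have e8 : k * (X - Y) / (l₁ * (1 - Y ^ 2)) = k * X / l₁ := by
    have h1Y : 1 - Y ^ 2 = s * Y := by linarith [hY2]
    rw [hXmY, h1Y, hXinv]
    field_simp
  refine ⟨hWn, hZn, hXn, hYn, ?_, ?_, ?_, ?_⟩
  · rw [e5]; exact main5
  · rw [e6]; exact main5
  · rw [e7]; exact main7
  · rw [e8]; exact main7
end

section
/- The following hold. (i) If λ₁·λ₂ < k, then neither system (S1) nor system (S2) admits a real solution (r, t) with r·t ≠ 0. (ii) If k < λ₁·λ₂ < 2k, then system (S1) admits a real solution (r, t) with r·t ≠ 0 if and only if system (S2) does, if and only if 𝔪 < −β < 𝔐; in that case each of (S1) and (S2) admits exactly four distinct real solutions (r, t) with r·t ≠ 0, and (S1) and (S2) share no common solution. (iii) If λ₁·(λ₂ − λ₁) > 2k, then system (S1) admits a real solution (r, t) with r·t ≠ 0 if and only if system (S2) does, if and only if 𝔐 < −β; in that case each of (S1) and (S2) admits exactly four distinct real solutions (r, t) with r·t ≠ 0, and (S1) and (S2) share no common solution. -/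
set_option maxHeartbeats 1000000

/-- System (S1) in the unknowns `(r, t)`. -/
def Sys1 (ϱ l₁ l₂ β f g X W : ℝ) (p : ℝ × ℝ) : Prop :=
  ϱ * p.1 ^ 2 * l₁ + ϱ * p.2 ^ 2 * l₂ + β = f ∧
  ϱ * p.1 ^ 2 * l₁ * X ^ 2 + ϱ * p.2 ^ 2 * l₂ * W ^ 2 + β = g

/-- System (S2) in the unknowns `(r, t)`. -/
def Sys2 (ϱ l₁ l₂ β f g Y Z : ℝ) (p : ℝ × ℝ) : Prop :=
  ϱ * p.1 ^ 2 * l₁ + ϱ * p.2 ^ 2 * l₂ + β = g ∧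
  ϱ * p.1 ^ 2 * l₁ * Y ^ 2 + ϱ * p.2 ^ 2 * l₂ * Z ^ 2 + β = f

lemma sq_lt_sq_pos' {x w : ℝ} (h1 : x < w) (h0 : 0 < x) : x^2 < w^2 := by nlinarith

lemma sq_lt_sq_neg' {x w : ℝ} (h1 : x < w) (h2 : w < 0) : w^2 < x^2 := by nlinarith

lemma abs_lt_one_sq_neg {x : ℝ} (h1 : -1 < x) (h2 : x < 0) : x^2 < 1 := by nlinarith

lemma sq_lt_one_pos {x : ℝ} (h1 : 0 < x) (h2 : x < 1) : x^2 < 1 := by nlinarith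

lemma gt_one_sq {w : ℝ} (h : 1 < w) : 1 < w^2 := by nlinarith

lemma lt_neg_one_sq {z : ℝ} (h : z < -1) : 1 < z^2 := by nlinarith

lemma recip_flip {x w y z : ℝ} (hxy : x*y = 1) (hwz : w*z = 1) (h1 : x < w) (h2 : w < 0) :
    z < y := by
  have hxw : 0 < x*w := mul_pos_of_neg_of_neg (h1.trans h2) h2
  nlinarith

lemma recip_flip_pos {x w y z : ℝ} (hxy : x*y = 1) (hwz : w*z = 1) (h1 : x < w) (h0 : 0 < x) :
    z < y := by
  have hxw : 0 < x*w := mul_pos h0 (h0.trans h1)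
  nlinarith

lemma Mm_pos {M m c r : ℝ} (h : (M-m)*c = r) (hc : 0 < c) (hr : 0 < r) : m < M := by nlinarith

lemma lin_u {u v F G β P Q m M : ℝ}
    (hI1 : G - F*Q^2 = m*(Q^2-1)) (hI2 : F*P^2 - G = M*(1-P^2))
    (h1 : u + v + β = F) (h2 : u*P^2 + v*Q^2 + β = G) :
    u*(Q^2-P^2) = (Q^2-1)*(-β-m) ∧ v*(Q^2-P^2) = (1-P^2)*(-β-M) := by
  constructor
  · linear_combination Q^2*h1 - h2 - hI1
  · linear_combination h2 - P^2*h1 - hI2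

lemma keyA (ϱ a b β F G m M P Q : ℝ) (hϱ : 0 < ϱ) (ha : 0 < a) (hb : 0 < b)
    (hI1 : G - F*Q^2 = m*(Q^2-1)) (hI2 : F*P^2 - G = M*(1-P^2))
    (hdet : Q^2 - P^2 ≠ 0) :
    (∃ p : ℝ × ℝ, p.1 * p.2 ≠ 0 ∧ Sys1 ϱ a b β F G P Q p) ↔
    (0 < (Q^2-1)*(-β-m)/(Q^2-P^2) ∧ 0 < (1-P^2)*(-β-M)/(Q^2-P^2)) := by
  constructor
  · rintro ⟨⟨r, t⟩, hrt, h1, h2⟩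
    simp only at h1 h2 hrt
    have hr : r ≠ 0 := fun h => hrt (by simp [h])
    have ht : t ≠ 0 := fun h => hrt (by simp [h])
    have hu : 0 < ϱ * r^2 * a := by positivity
    have hv : 0 < ϱ * t^2 * b := by positivity
    obtain ⟨e1, e2⟩ := lin_u hI1 hI2 h1 (by linear_combination h2)
    constructor
    · rw [← e1, mul_div_assoc, div_self hdet, mul_one]; exact hu
    · rw [← e2, mul_div_assoc, div_self hdet, mul_one]; exact hv
  · rintro ⟨hu, hv⟩
    set u := (Q^2-1)*(-β-m)/(Q^2-P^2) with hu_def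
    set v := (1-P^2)*(-β-M)/(Q^2-P^2) with hv_def
    have hua : ϱ * (u / (ϱ * a)) * a = u := by field_simp
    have hvb : ϱ * (v / (ϱ * b)) * b = v := by field_simp
    refine ⟨⟨Real.sqrt (u/(ϱ*a)), Real.sqrt (v/(ϱ*b))⟩, ?_, ?_, ?_⟩
    · have h1 : 0 < u/(ϱ*a) := by positivity
      have h2 : 0 < v/(ϱ*b) := by positivity
      simp only
      positivity
    · simp only
      rw [Real.sq_sqrt (by positivity), Real.sq_sqrt (by positivity), hua, hvb]
      have e : (u + v + β) * (Q^2-P^2) = F * (Q^2-P^2) := by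
        calc (u + v + β) * (Q^2-P^2)
            = (Q^2-1)*(-β-m) + (1-P^2)*(-β-M) + β*(Q^2-P^2) := by
              rw [hu_def, hv_def]; field_simp; try ring
          _ = F * (Q^2-P^2) := by linear_combination hI1 + hI2
      exact mul_right_cancel₀ hdet e
    · simp only
      rw [Real.sq_sqrt (by positivity), Real.sq_sqrt (by positivity)]
      have e : (u * P^2 + v * Q^2 + β) * (Q^2-P^2) = G * (Q^2-P^2) := by
        calc (u * P^2 + v * Q^2 + β) * (Q^2-P^2)
            = (Q^2-1)*(-β-m)*P^2 + (1-P^2)*(-β-M)*Q^2 + β*(Q^2-P^2) := by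
              rw [hu_def, hv_def]; field_simp; try ring
          _ = G * (Q^2-P^2) := by linear_combination P^2*hI1 + Q^2*hI2
      rw [hua, hvb]
      exact mul_right_cancel₀ hdet e

lemma keyB (ϱ a b β F G m M P Q : ℝ) (hϱ : 0 < ϱ) (ha : 0 < a) (hb : 0 < b)
    (hI1 : G - F*Q^2 = m*(Q^2-1)) (hI2 : F*P^2 - G = M*(1-P^2))
    (hdet : Q^2 - P^2 ≠ 0)
    (hu : 0 < (Q^2-1)*(-β-m)/(Q^2-P^2)) (hv : 0 < (1-P^2)*(-β-M)/(Q^2-P^2)) :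
    {p : ℝ × ℝ | p.1 * p.2 ≠ 0 ∧ Sys1 ϱ a b β F G P Q p}.ncard = 4 := by
  set u := (Q^2-1)*(-β-m)/(Q^2-P^2) with hu_def
  set v := (1-P^2)*(-β-M)/(Q^2-P^2) with hv_def
  set r0 := Real.sqrt (u/(ϱ*a)) with hr0_def
  set t0 := Real.sqrt (v/(ϱ*b)) with ht0_def
  have hr0 : 0 < r0 := Real.sqrt_pos.mpr (by positivity)
  have ht0 : 0 < t0 := Real.sqrt_pos.mpr (by positivity)
  have hr0sq : r0^2 = u/(ϱ*a) := Real.sq_sqrt (by positivity)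
  have ht0sq : t0^2 = v/(ϱ*b) := Real.sq_sqrt (by positivity)
  have hua : ϱ * r0^2 * a = u := by rw [hr0sq]; field_simp
  have hvb : ϱ * t0^2 * b = v := by rw [ht0sq]; field_simp
  have eq1 : u + v + β = F := by
    have e : (u + v + β) * (Q^2-P^2) = F * (Q^2-P^2) := by
      calc (u + v + β) * (Q^2-P^2)
          = (Q^2-1)*(-β-m) + (1-P^2)*(-β-M) + β*(Q^2-P^2) := by
            rw [hu_def, hv_def]; field_simp; try ring
        _ = F * (Q^2-P^2) := by linear_combination hI1 + hI2
    exact mul_right_cancel₀ hdet e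
  have eq2 : u * P^2 + v * Q^2 + β = G := by
    have e : (u * P^2 + v * Q^2 + β) * (Q^2-P^2) = G * (Q^2-P^2) := by
      calc (u * P^2 + v * Q^2 + β) * (Q^2-P^2)
          = (Q^2-1)*(-β-m)*P^2 + (1-P^2)*(-β-M)*Q^2 + β*(Q^2-P^2) := by
            rw [hu_def, hv_def]; field_simp; try ring
        _ = G * (Q^2-P^2) := by linear_combination P^2*hI1 + Q^2*hI2
    exact mul_right_cancel₀ hdet e
  have hset : {p : ℝ × ℝ | p.1 * p.2 ≠ 0 ∧ Sys1 ϱ a b β F G P Q p}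
      = {(r0,t0), (-r0,t0), (r0,-t0), (-r0,-t0)} := by
    ext ⟨r, t⟩
    simp only [Set.mem_setOf_eq, Set.mem_insert_iff, Set.mem_singleton_iff, Prod.mk.injEq,
      Sys1]
    constructor
    · rintro ⟨hrt, h1, h2⟩
      obtain ⟨e1, e2⟩ := lin_u hI1 hI2 h1 (by linear_combination h2)
      have hru : ϱ*r^2*a = u := by rw [hu_def]; exact (eq_div_iff hdet).mpr e1
      have htv : ϱ*t^2*b = v := by rw [hv_def]; exact (eq_div_iff hdet).mpr e2
      have hr2 : (r - r0)*(r + r0) = 0 := by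
        have : r^2 = r0^2 := by
          rw [hr0sq]; rw [← hru]; field_simp
        linear_combination this
      have ht2 : (t - t0)*(t + t0) = 0 := by
        have : t^2 = t0^2 := by
          rw [ht0sq]; rw [← htv]; field_simp
        linear_combination this
      rcases mul_eq_zero.mp hr2 with h | h <;> rcases mul_eq_zero.mp ht2 with h' | h'
      · exact Or.inl ⟨by linarith, by linarith⟩
      · exact Or.inr (Or.inr (Or.inl ⟨by linarith, by linarith⟩))
      · exact Or.inr (Or.inl ⟨by linarith, by linarith⟩)
      · exact Or.inr (Or.inr (Or.inr ⟨by linarith, by linarith⟩))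
    · have main : ∀ s ε : ℝ, s^2 = r0^2 → ε^2 = t0^2 →
          (ϱ*s^2*a + ϱ*ε^2*b + β = F ∧ ϱ*s^2*a*P^2 + ϱ*ε^2*b*Q^2 + β = G) := by
        intro s ε hs hε
        rw [hs, hε]
        constructor
        · linear_combination eq1 + hua + hvb
        · linear_combination eq2 + P^2*hua + Q^2*hvb
      rintro (⟨h1, h2⟩ | ⟨h1, h2⟩ | ⟨h1, h2⟩ | ⟨h1, h2⟩) <;> subst h1 <;> subst h2 <;>
        refine ⟨fun hc => ?_, main _ _ (by ring) (by ring)⟩ <;>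
        rcases mul_eq_zero.mp hc with h | h <;> linarith
  rw [hset]
  have d1 : ((r0, t0) : ℝ×ℝ) ∉ ({(-r0, t0), (r0, -t0), (-r0, -t0)} : Set (ℝ×ℝ)) := by
    intro h
    simp only [Set.mem_insert_iff, Set.mem_singleton_iff, Prod.mk.injEq] at h
    rcases h with ⟨h, -⟩ | ⟨-, h⟩ | ⟨h, -⟩ <;> linarith
  have d2 : ((-r0, t0) : ℝ×ℝ) ∉ ({(r0, -t0), (-r0, -t0)} : Set (ℝ×ℝ)) := by
    intro h
    simp only [Set.mem_insert_iff, Set.mem_singleton_iff, Prod.mk.injEq] at h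
    rcases h with ⟨-, h⟩ | ⟨-, h⟩ <;> linarith
  have d3 : ((r0, -t0) : ℝ×ℝ) ∉ ({(-r0, -t0)} : Set (ℝ×ℝ)) := by
    intro h
    simp only [Set.mem_singleton_iff, Prod.mk.injEq] at h
    rcases h with ⟨h, -⟩
    linarith
  rw [Set.ncard_insert_of_notMem d1, Set.ncard_insert_of_notMem d2,
    Set.ncard_insert_of_notMem d3, Set.ncard_singleton]

lemma pos_div_iff' {A Dt x : ℝ} (h : 0 < A/Dt) : 0 < A*x/Dt ↔ 0 < x := by
  have e : A*x/Dt = (A/Dt)*x := by ring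
  rw [e]
  exact ⟨fun hx => by nlinarith, fun hx => mul_pos h hx⟩

lemma neg_div_iff' {A Dt x : ℝ} (h : A/Dt < 0) : 0 < A*x/Dt ↔ x < 0 := by
  have e : A*x/Dt = (A/Dt)*x := by ring
  rw [e]
  exact ⟨fun hx => by nlinarith, fun hx => mul_pos_of_neg_of_neg h hx⟩

lemma roots_pos {Φ X Y : ℝ} (hs : X + Y = Φ) (hp : X*Y = 1) (hlt : Y < X) (h2 : 2 < Φ) :
    1 < X ∧ 0 < Y ∧ Y < 1 := by
  have hY : 0 < Y := by nlinarith
  have hY1 : Y < 1 := by nlinarith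
  have hX1 : 1 < X := by nlinarith
  exact ⟨hX1, hY, hY1⟩

lemma roots_neg {Φ X Y : ℝ} (hs : X + Y = Φ) (hp : X*Y = 1) (hlt : Y < X) (h2 : Φ < -2) :
    -1 < X ∧ X < 0 ∧ Y < -1 := by
  have hX : X < 0 := by nlinarith
  have hX1 : -1 < X := by nlinarith
  have hY1 : Y < -1 := by nlinarith
  exact ⟨hX1, hX, hY1⟩

lemma prod_neg_snd {x y : ℝ} (h : 0 < x*y) (hx : x < 0) : y < 0 := by nlinarith

lemma sign_flip' {x K R : ℝ} (h : x*K = R) (hK : K < 0) (hR : 0 < R) : x < 0 := by nlinarith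

lemma sign_keep' {x K R : ℝ} (h : x*K = R) (hK : K < 0) (hR : R < 0) : 0 < x := by nlinarith

lemma sign_pos' {x K R : ℝ} (h : x*K = R) (hK : 0 < K) (hR : 0 < R) : 0 < x := by nlinarith

lemma pos_factor {a x : ℝ} (ha : 0 < a) (h : 0 < a*x) : 0 < x := by nlinarith

lemma neg_lt_of_sq_lt {e u : ℝ} (h : e^2 < u^2) (hu : 0 < u) : -u < e := by nlinarith

structure Facts (k a b Φ Ψ X Y W Z f g m M : ℝ) : Prop where
  hgf : g < f
  hI1 : g - f*W^2 = m*(W^2-1)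
  hI2 : f*X^2 - g = M*(1-X^2)
  hI3 : f - g*Z^2 = m*(Z^2-1)
  hI4 : g*Y^2 - f = M*(1-Y^2)
  hYX : Y < X
  hXY : X*Y = 1
  hXpY : X + Y = Φ
  hZW : Z < W
  hWZ : W*Z = 1
  hWpZ : W + Z = Ψ
  hXW : X < W
  hA : (Φ-2)*(k*(k-a*b)) = a^2*(b*(b-a)+2*k)
  hB : (Φ+2)*(k*(k-a*b)) = (2*k-a*b)*(2*k-a*(b-a))
  hC : (Ψ-2)*(k*(k-a*b)) = b^2*(2*k-a*(b-a))
  hDD : (Ψ+2)*(k*(k-a*b)) = (2*k-a*b)*(b*(b-a)+2*k)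
  hMm : (M - m)*((a*b-k)*a*b) = (b-a)*(k-a*b)^2

lemma buildFacts (k a b σ ζ Φ Ψ X Y W Z f g m M : ℝ)
    (hk : 0 < k) (ha : 0 < a) (hab : a < b) (hne : a * b ≠ k)
    (hζ : ζ = b / a) (hσ : σ = (k - a * b) / k)
    (hΦ : Φ = ((ζ + 1) + (ζ - 1) * σ ^ 2) / (σ * ζ))
    (hΨ : Ψ = ((ζ + 1) - (ζ - 1) * σ ^ 2) / σ)
    (hX : X = (Φ + Real.sqrt (Φ ^ 2 - 4)) / 2)
    (hY : Y = (Φ - Real.sqrt (Φ ^ 2 - 4)) / 2)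
    (hW : W = (Ψ + Real.sqrt (Ψ ^ 2 - 4)) / 2)
    (hZ : Z = (Ψ - Real.sqrt (Ψ ^ 2 - 4)) / 2)
    (hf : f = (k * X - a ^ 2 - k) / a)
    (hg : g = (k * Y - a ^ 2 - k) / a)
    (hm : m = (k ^ 2 + k * b * (b - a) + a ^ 2 * b ^ 2) / ((a * b - k) * b))
    (hM : M = (k ^ 2 - k * a * (b - a) + a ^ 2 * b ^ 2) / ((a * b - k) * a))
    (hcase : 0 < (2*k - a*b) * (2*k - a*(b-a))) :
    Facts k a b Φ Ψ X Y W Z f g m M := by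
  have hb : 0 < b := ha.trans hab
  have hk0 : k ≠ 0 := hk.ne'
  have ha0 : a ≠ 0 := ha.ne'
  have hb0 : b ≠ 0 := hb.ne'
  have habk : a*b - k ≠ 0 := sub_ne_zero.mpr hne
  have hkab : k - a*b ≠ 0 := sub_ne_zero.mpr (Ne.symm hne)
  have hkab' : k - b*a ≠ 0 := by rwa [mul_comm]
  have hζ1 : 1 < ζ := by rw [hζ]; exact (one_lt_div ha).mpr hab
  have hζ0 : 0 < ζ := by linarith
  have hσ0 : σ ≠ 0 := by rw [hσ]; exact div_ne_zero hkab hk0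
  have hA : (Φ-2)*(k*(k-a*b)) = a^2*(b*(b-a)+2*k) := by
    rw [hΦ, hσ, hζ]; field_simp; ring
  have hB : (Φ+2)*(k*(k-a*b)) = (2*k-a*b)*(2*k-a*(b-a)) := by
    rw [hΦ, hσ, hζ]; field_simp; ring
  have hC : (Ψ-2)*(k*(k-a*b)) = b^2*(2*k-a*(b-a)) := by
    rw [hΨ, hσ, hζ]; field_simp; ring
  have hDD : (Ψ+2)*(k*(k-a*b)) = (2*k-a*b)*(b*(b-a)+2*k) := by
    rw [hΨ, hσ, hζ]; field_simp; ring
  have hMm : (M - m)*((a*b-k)*a*b) = (b-a)*(k-a*b)^2 := by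
    rw [hm, hM]; field_simp; ring
  have hbb : 0 < b*(b-a)+2*k := by
    have : 0 < b*(b-a) := mul_pos hb (by linarith)
    linarith
  have hK2 : (0:ℝ) < (k*(k-a*b))^2 := by positivity
  have h42 : (Φ^2-4)*(k*(k-a*b))^2
      = (a^2*(b*(b-a)+2*k)) * ((2*k-a*b)*(2*k-a*(b-a))) := by
    linear_combination ((Φ+2)*(k*(k-a*b)))*hA + (a^2*(b*(b-a)+2*k))*hB
  have hKne : k*(k-a*b) ≠ 0 := mul_ne_zero hk0 hkab
  have hfac : 0 < Φ^2 - 4 := by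
    have hrpos : 0 < (a^2*(b*(b-a)+2*k)) * ((2*k-a*b)*(2*k-a*(b-a))) :=
      mul_pos (by positivity) hcase
    have he : Φ^2-4
        = ((a^2*(b*(b-a)+2*k)) * ((2*k-a*b)*(2*k-a*(b-a)))) / (k*(k-a*b))^2 := by
      rw [eq_div_iff (pow_ne_zero 2 hKne)]; exact h42
    rw [he]; exact div_pos hrpos hK2
  have hD2 : (Real.sqrt (Φ^2-4))^2 = Φ^2-4 := Real.sq_sqrt hfac.le
  have hD0 : 0 < Real.sqrt (Φ^2-4) := Real.sqrt_pos.mpr hfac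
  have hr : Ψ^2 - 4 = ζ^2*(Φ^2-4) := by rw [hΦ, hΨ]; field_simp; ring
  have hPsiD : Real.sqrt (Ψ^2-4) = ζ * Real.sqrt (Φ^2-4) := by
    calc Real.sqrt (Ψ^2-4) = Real.sqrt ((ζ * Real.sqrt (Φ^2-4))^2) := by
          rw [mul_pow, hD2, hr]
      _ = ζ * Real.sqrt (Φ^2-4) := Real.sqrt_sq (by positivity)
  have hXY : X*Y = 1 := by rw [hX, hY]; linear_combination (-(1:ℝ)/4) * hD2
  have hXpY : X + Y = Φ := by rw [hX, hY]; ring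
  have hYX : Y < X := by rw [hX, hY]; linarith
  have hWZ : W*Z = 1 := by
    rw [hW, hZ, hPsiD]; linear_combination (-(ζ^2)/4) * hD2 + (1/4) * hr
  have hWpZ : W + Z = Ψ := by rw [hW, hZ]; ring
  have hZW : Z < W := by
    rw [hW, hZ, hPsiD]
    have : 0 < ζ * Real.sqrt (Φ^2-4) := by positivity
    linarith
  -- values
  have haf : a*f = k*X - a^2 - k := by rw [hf]; field_simp
  have hag : a*g = k*Y - a^2 - k := by rw [hg]; field_simp
  have haM : a*M = a^2 + k - k*Φ := by rw [hM, hΦ, hσ, hζ]; field_simp; ring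
  have habm : 2*a*b*m = 2*b*(a^2+k) - k*b*Φ - k*a*Ψ := by
    rw [hm, hΦ, hΨ, hσ, hζ]; field_simp; ring
  have hWmZ : a*(W - Z) = b*(X - Y) := by
    rw [hW, hZ, hX, hY, hPsiD, hζ]; field_simp; ring
  have hfM : a*f + a*M = -(k*Y) := by linear_combination haf + haM + k*hXpY
  have hgM : a*g + a*M = -(k*X) := by linear_combination hag + haM + k*hXpY
  have hfm2 : 2*a*b*f + 2*a*b*m = -(2*a*k*Z) := by
    linear_combination 2*b*haf + habm + k*b*hXpY + k*a*hWpZ - k*hWmZ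
  have hgm2 : 2*a*b*g + 2*a*b*m = -(2*a*k*W) := by
    linear_combination 2*b*hag + habm + k*b*hXpY + k*a*hWpZ + k*hWmZ
  have hI2 : f*X^2 - g = M*(1-X^2) := by
    have h : a*(f*X^2-g) = a*(M*(1-X^2)) := by
      linear_combination X^2*hfM - hgM - k*X*hXY
    exact mul_left_cancel₀ ha0 h
  have hI4 : g*Y^2 - f = M*(1-Y^2) := by
    have h : a*(g*Y^2-f) = a*(M*(1-Y^2)) := by
      linear_combination Y^2*hgM - hfM - k*Y*hXY
    exact mul_left_cancel₀ ha0 h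
  have hI1 : g - f*W^2 = m*(W^2-1) := by
    have h : (2*a*b)*(g - f*W^2) = (2*a*b)*(m*(W^2-1)) := by
      linear_combination hgm2 - W^2*hfm2 + 2*a*k*W*hWZ
    exact mul_left_cancel₀ (by positivity) h
  have hI3 : f - g*Z^2 = m*(Z^2-1) := by
    have h : (2*a*b)*(f - g*Z^2) = (2*a*b)*(m*(Z^2-1)) := by
      linear_combination hfm2 - Z^2*hgm2 + 2*a*k*Z*hWZ
    exact mul_left_cancel₀ (by positivity) h
  have hgf : g < f := by
    have h : a*(f-g) = k*(X-Y) := by linear_combination haf - hag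
    have h2 : 0 < a*(f-g) := h ▸ mul_pos hk (by linarith)
    have := pos_factor ha h2
    linarith
  -- X < W
  have hXW : X < W := by
    rcases lt_or_ge (a*b) (2*k) with hcs | hcs
    · -- 1 - σ² > 0 case
      have key : ((ζ-1)*Real.sqrt (Φ^2-4))^2 - (Ψ-Φ)^2
          = 4*(ζ-1)^2*(a*b*(2*k-a*b))/(ζ*k^2) := by
        rw [mul_pow, hD2, hΦ, hΨ, hσ, hζ]; field_simp; ring
      have hkey : 0 < 4*(ζ-1)^2*(a*b*(2*k-a*b))/(ζ*k^2) := by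
        have : 0 < 2*k - a*b := by linarith
        have : 0 < ζ - 1 := by linarith
        positivity
      rw [hX, hW, hPsiD]
      have hcd : 0 < (ζ-1)*Real.sqrt (Φ^2-4) :=
        mul_pos (by linarith) hD0
      have h1 : (Ψ-Φ)^2 < ((ζ-1)*Real.sqrt (Φ^2-4))^2 := by linarith [key ▸ hkey]
      have h2 := neg_lt_of_sq_lt h1 hcd
      linarith
    · -- case iii style: Φ < -2 < 2 < Ψ
      have hneg : 2*k - a*b < 0 := by
        rcases lt_or_eq_of_le (by linarith : 2*k - a*b ≤ 0) with h | h
        · exact h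
        · rw [h] at hcase; simp at hcase
      have hneg2 : 2*k - a*(b-a) < 0 := prod_neg_snd hcase hneg
      have hKn : k*(k-a*b) < 0 := mul_neg_of_pos_of_neg hk (by linarith)
      have hΦ2 : Φ < -2 := by
        have := sign_flip' hB hKn (mul_pos_of_neg_of_neg hneg hneg2)
        linarith
      have hΨ2 : 2 < Ψ := by
        have := sign_keep' hC hKn (mul_neg_of_pos_of_neg (pow_pos hb 2) hneg2)
        linarith
      obtain ⟨-, hX0, -⟩ := roots_neg hXpY hXY hYX hΦ2
      obtain ⟨hW1, -, -⟩ := roots_pos hWpZ hWZ hZW hΨ2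
      linarith
  exact ⟨hgf, hI1, hI2, hI3, hI4, hYX, hXY, hXpY, hZW, hWZ, hWpZ, hXW, hA, hB, hC, hDD, hMm⟩

theorem stmt15 (k l₁ l₂ β ϱ : ℝ) (hk : 0 < k) (h1 : 0 < l₁) (h12 : l₁ < l₂)
    (hne : l₁ * l₂ ≠ k) (hϱ : 0 < ϱ)
    (ζ σ Φ Ψ X Y W Z f g m M : ℝ)
    (hζ : ζ = l₂ / l₁) (hσ : σ = (k - l₁ * l₂) / k)
    (hΦ : Φ = ((ζ + 1) + (ζ - 1) * σ ^ 2) / (σ * ζ))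
    (hΨ : Ψ = ((ζ + 1) - (ζ - 1) * σ ^ 2) / σ)
    (hX : X = (Φ + Real.sqrt (Φ ^ 2 - 4)) / 2)
    (hY : Y = (Φ - Real.sqrt (Φ ^ 2 - 4)) / 2)
    (hW : W = (Ψ + Real.sqrt (Ψ ^ 2 - 4)) / 2)
    (hZ : Z = (Ψ - Real.sqrt (Ψ ^ 2 - 4)) / 2)
    (hf : f = (k * X - l₁ ^ 2 - k) / l₁)
    (hg : g = (k * Y - l₁ ^ 2 - k) / l₁)
    (hm : m = (k ^ 2 + k * l₂ * (l₂ - l₁) + l₁ ^ 2 * l₂ ^ 2) / ((l₁ * l₂ - k) * l₂))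
    (hM : M = (k ^ 2 - k * l₁ * (l₂ - l₁) + l₁ ^ 2 * l₂ ^ 2) / ((l₁ * l₂ - k) * l₁)) :
    (l₁ * l₂ < k →
      (¬∃ p : ℝ × ℝ, p.1 * p.2 ≠ 0 ∧ Sys1 ϱ l₁ l₂ β f g X W p) ∧
      (¬∃ p : ℝ × ℝ, p.1 * p.2 ≠ 0 ∧ Sys2 ϱ l₁ l₂ β f g Y Z p)) ∧
    (k < l₁ * l₂ → l₁ * l₂ < 2 * k →
      ((∃ p : ℝ × ℝ, p.1 * p.2 ≠ 0 ∧ Sys1 ϱ l₁ l₂ β f g X W p) ↔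
        (∃ p : ℝ × ℝ, p.1 * p.2 ≠ 0 ∧ Sys2 ϱ l₁ l₂ β f g Y Z p)) ∧
      ((∃ p : ℝ × ℝ, p.1 * p.2 ≠ 0 ∧ Sys1 ϱ l₁ l₂ β f g X W p) ↔
        (m < -β ∧ -β < M)) ∧
      (m < -β → -β < M →
        {p : ℝ × ℝ | p.1 * p.2 ≠ 0 ∧ Sys1 ϱ l₁ l₂ β f g X W p}.ncard = 4 ∧
        {p : ℝ × ℝ | p.1 * p.2 ≠ 0 ∧ Sys2 ϱ l₁ l₂ β f g Y Z p}.ncard = 4 ∧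
        ¬∃ p : ℝ × ℝ, Sys1 ϱ l₁ l₂ β f g X W p ∧ Sys2 ϱ l₁ l₂ β f g Y Z p)) ∧
    (l₁ * (l₂ - l₁) > 2 * k →
      ((∃ p : ℝ × ℝ, p.1 * p.2 ≠ 0 ∧ Sys1 ϱ l₁ l₂ β f g X W p) ↔
        (∃ p : ℝ × ℝ, p.1 * p.2 ≠ 0 ∧ Sys2 ϱ l₁ l₂ β f g Y Z p)) ∧
      ((∃ p : ℝ × ℝ, p.1 * p.2 ≠ 0 ∧ Sys1 ϱ l₁ l₂ β f g X W p) ↔ M < -β) ∧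
      (M < -β →
        {p : ℝ × ℝ | p.1 * p.2 ≠ 0 ∧ Sys1 ϱ l₁ l₂ β f g X W p}.ncard = 4 ∧
        {p : ℝ × ℝ | p.1 * p.2 ≠ 0 ∧ Sys2 ϱ l₁ l₂ β f g Y Z p}.ncard = 4 ∧
        ¬∃ p : ℝ × ℝ, Sys1 ϱ l₁ l₂ β f g X W p ∧ Sys2 ϱ l₁ l₂ β f g Y Z p)) := by
  have hb : 0 < l₂ := h1.trans h12
  have ha2 : 0 < l₁^2 := pow_pos h1 2
  have e1 : l₁*(l₂-l₁) = l₁*l₂ - l₁^2 := by ring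
  refine ⟨?_, ?_, ?_⟩
  · -- case i : l₁l₂ < k
    intro hi
    have hca : 0 < (2*k - l₁*l₂) * (2*k - l₁*(l₂-l₁)) :=
      mul_pos (by linarith) (by linarith)
    have F := buildFacts k l₁ l₂ σ ζ Φ Ψ X Y W Z f g m M hk h1 h12 hne hζ hσ hΦ hΨ
      hX hY hW hZ hf hg hm hM hca
    have hKp : 0 < k*(k - l₁*l₂) := mul_pos hk (by linarith)
    have hΦ2 : 2 < Φ := by
      have hbb : 0 < l₂*(l₂-l₁) := mul_pos hb (by linarith)
      have := sign_pos' F.hA hKp (mul_pos ha2 (by linarith))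
      linarith
    have hΨ2 : 2 < Ψ := by
      have := sign_pos' F.hC hKp (mul_pos (pow_pos hb 2) (by linarith))
      linarith
    obtain ⟨hX1, hY0, hY1⟩ := roots_pos F.hXpY F.hXY F.hYX hΦ2
    obtain ⟨hW1, hZ0, hZ1⟩ := roots_pos F.hWpZ F.hWZ F.hZW hΨ2
    have hdet1 : 0 < W^2 - X^2 := by
      have := sq_lt_sq_pos' F.hXW (by linarith); linarith
    have hW21 : 0 < W^2 - 1 := by have := gt_one_sq hW1; linarith
    have hX21 : 1 - X^2 < 0 := by have := gt_one_sq hX1; linarith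
    have hZ21 : Z^2 - 1 < 0 := by have := sq_lt_one_pos hZ0 hZ1; linarith
    have hY21 : 0 < 1 - Y^2 := by have := sq_lt_one_pos hY0 hY1; linarith
    have hZY : Z < Y := recip_flip_pos F.hXY F.hWZ F.hXW (by linarith)
    have hdet2 : Z^2 - Y^2 < 0 := by have := sq_lt_sq_pos' hZY hZ0; linarith
    have hMm : M < m := by
      have := sign_flip' F.hMm
        (mul_neg_of_neg_of_pos (mul_neg_of_neg_of_pos (by linarith) h1) hb)
        (mul_pos (by linarith) (pow_pos (by linarith : (0:ℝ) < k - l₁*l₂) 2))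
      linarith
    constructor
    · intro hS1
      obtain ⟨hp1, hp2⟩ := (keyA ϱ l₁ l₂ β f g m M X W hϱ h1 hb F.hI1 F.hI2 hdet1.ne').mp hS1
      have h1' := (pos_div_iff' (div_pos hW21 hdet1)).mp hp1
      have h2' := (neg_div_iff' (div_neg_of_neg_of_pos hX21 hdet1)).mp hp2
      linarith
    · intro hS2
      obtain ⟨hp1, hp2⟩ := (keyA ϱ l₁ l₂ β g f m M Y Z hϱ h1 hb F.hI3 F.hI4 hdet2.ne).mp hS2
      have h1' := (pos_div_iff' (div_pos_of_neg_of_neg hZ21 hdet2)).mp hp1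
      have h2' := (neg_div_iff' (div_neg_of_pos_of_neg hY21 hdet2)).mp hp2
      linarith
  · -- case ii : k < l₁l₂ < 2k
    intro hii hii2
    have hca : 0 < (2*k - l₁*l₂) * (2*k - l₁*(l₂-l₁)) :=
      mul_pos (by linarith) (by linarith)
    have F := buildFacts k l₁ l₂ σ ζ Φ Ψ X Y W Z f g m M hk h1 h12 hne hζ hσ hΦ hΨ
      hX hY hW hZ hf hg hm hM hca
    have hKn : k*(k - l₁*l₂) < 0 := mul_neg_of_pos_of_neg hk (by linarith)
    have hbb : 0 < l₂*(l₂-l₁) := mul_pos hb (by linarith)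
    have hΦ2 : Φ < -2 := by have := sign_flip' F.hB hKn hca; linarith
    have hΨ2 : Ψ < -2 := by
      have := sign_flip' F.hDD hKn (mul_pos (by linarith) (by linarith))
      linarith
    obtain ⟨hX1, hX0, hY1⟩ := roots_neg F.hXpY F.hXY F.hYX hΦ2
    obtain ⟨hW1, hW0, hZ1⟩ := roots_neg F.hWpZ F.hWZ F.hZW hΨ2
    have hdet1 : W^2 - X^2 < 0 := by have := sq_lt_sq_neg' F.hXW hW0; linarith
    have hW21 : W^2 - 1 < 0 := by have := abs_lt_one_sq_neg hW1 hW0; linarith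
    have hX21 : 0 < 1 - X^2 := by have := abs_lt_one_sq_neg hX1 hX0; linarith
    have hZ21 : 0 < Z^2 - 1 := by have := lt_neg_one_sq hZ1; linarith
    have hY21 : 1 - Y^2 < 0 := by have := lt_neg_one_sq hY1; linarith
    have hZY : Z < Y := recip_flip F.hXY F.hWZ F.hXW hW0
    have hdet2 : 0 < Z^2 - Y^2 := by
      have := sq_lt_sq_neg' hZY (by linarith : Y < 0); linarith
    have iff1 : (∃ p : ℝ × ℝ, p.1 * p.2 ≠ 0 ∧ Sys1 ϱ l₁ l₂ β f g X W p) ↔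
        (m < -β ∧ -β < M) := by
      rw [keyA ϱ l₁ l₂ β f g m M X W hϱ h1 hb F.hI1 F.hI2 hdet1.ne,
          pos_div_iff' (div_pos_of_neg_of_neg hW21 hdet1),
          neg_div_iff' (div_neg_of_pos_of_neg hX21 hdet1)]
      constructor <;> rintro ⟨u1, u2⟩ <;> exact ⟨by linarith, by linarith⟩
    have iff2 : (∃ p : ℝ × ℝ, p.1 * p.2 ≠ 0 ∧ Sys1 ϱ l₁ l₂ β g f Y Z p) ↔
        (m < -β ∧ -β < M) := by
      rw [keyA ϱ l₁ l₂ β g f m M Y Z hϱ h1 hb F.hI3 F.hI4 hdet2.ne',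
          pos_div_iff' (div_pos hZ21 hdet2),
          neg_div_iff' (div_neg_of_neg_of_pos hY21 hdet2)]
      constructor <;> rintro ⟨u1, u2⟩ <;> exact ⟨by linarith, by linarith⟩
    refine ⟨iff1.trans iff2.symm, iff1, ?_⟩
    intro hm' hM'
    refine ⟨?_, ?_, ?_⟩
    · exact keyB ϱ l₁ l₂ β f g m M X W hϱ h1 hb F.hI1 F.hI2 hdet1.ne
        ((pos_div_iff' (div_pos_of_neg_of_neg hW21 hdet1)).mpr (by linarith))
        ((neg_div_iff' (div_neg_of_pos_of_neg hX21 hdet1)).mpr (by linarith))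
    · exact keyB ϱ l₁ l₂ β g f m M Y Z hϱ h1 hb F.hI3 F.hI4 hdet2.ne'
        ((pos_div_iff' (div_pos hZ21 hdet2)).mpr (by linarith))
        ((neg_div_iff' (div_neg_of_neg_of_pos hY21 hdet2)).mpr (by linarith))
    · rintro ⟨p, hp1, hp2⟩
      exact absurd (hp2.1.symm.trans hp1.1) (ne_of_lt F.hgf)
  · -- case iii : l₁(l₂-l₁) > 2k
    intro h3
    have hab2k : 2*k < l₁*l₂ := by linarith
    have hca : 0 < (2*k - l₁*l₂) * (2*k - l₁*(l₂-l₁)) :=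
      mul_pos_of_neg_of_neg (by linarith) (by linarith)
    have F := buildFacts k l₁ l₂ σ ζ Φ Ψ X Y W Z f g m M hk h1 h12 hne hζ hσ hΦ hΨ
      hX hY hW hZ hf hg hm hM hca
    have hKn : k*(k - l₁*l₂) < 0 := mul_neg_of_pos_of_neg hk (by linarith)
    have hΦ2 : Φ < -2 := by have := sign_flip' F.hB hKn hca; linarith
    have hΨ2 : 2 < Ψ := by
      have := sign_keep' F.hC hKn (mul_neg_of_pos_of_neg (pow_pos hb 2) (by linarith))
      linarith
    obtain ⟨hX1, hX0, hY1⟩ := roots_neg F.hXpY F.hXY F.hYX hΦ2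
    obtain ⟨hW1, hZ0, hZ1⟩ := roots_pos F.hWpZ F.hWZ F.hZW hΨ2
    have hdet1 : 0 < W^2 - X^2 := by
      have := abs_lt_one_sq_neg hX1 hX0; have := gt_one_sq hW1; linarith
    have hW21 : 0 < W^2 - 1 := by have := gt_one_sq hW1; linarith
    have hX21 : 0 < 1 - X^2 := by have := abs_lt_one_sq_neg hX1 hX0; linarith
    have hZ21 : Z^2 - 1 < 0 := by have := sq_lt_one_pos hZ0 hZ1; linarith
    have hY21 : 1 - Y^2 < 0 := by have := lt_neg_one_sq hY1; linarith
    have hdet2 : Z^2 - Y^2 < 0 := by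
      have := sq_lt_one_pos hZ0 hZ1; have := lt_neg_one_sq hY1; linarith
    have hmM : m < M := Mm_pos F.hMm
      (mul_pos (mul_pos (by linarith) h1) hb)
      (mul_pos (by linarith)
        (pow_two_pos_of_ne_zero (ne_of_lt (show k - l₁*l₂ < 0 by linarith))))
    have iff1 : (∃ p : ℝ × ℝ, p.1 * p.2 ≠ 0 ∧ Sys1 ϱ l₁ l₂ β f g X W p) ↔ M < -β := by
      rw [keyA ϱ l₁ l₂ β f g m M X W hϱ h1 hb F.hI1 F.hI2 hdet1.ne',
          pos_div_iff' (div_pos hW21 hdet1),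
          pos_div_iff' (div_pos hX21 hdet1)]
      constructor
      · rintro ⟨u1, u2⟩; linarith
      · intro h; exact ⟨by linarith, by linarith⟩
    have iff2 : (∃ p : ℝ × ℝ, p.1 * p.2 ≠ 0 ∧ Sys1 ϱ l₁ l₂ β g f Y Z p) ↔ M < -β := by
      rw [keyA ϱ l₁ l₂ β g f m M Y Z hϱ h1 hb F.hI3 F.hI4 hdet2.ne,
          pos_div_iff' (div_pos_of_neg_of_neg hZ21 hdet2),
          pos_div_iff' (div_pos_of_neg_of_neg hY21 hdet2)]
      constructor
      · rintro ⟨u1, u2⟩; linarith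
      · intro h; exact ⟨by linarith, by linarith⟩
    refine ⟨iff1.trans iff2.symm, iff1, ?_⟩
    intro hM'
    refine ⟨?_, ?_, ?_⟩
    · exact keyB ϱ l₁ l₂ β f g m M X W hϱ h1 hb F.hI1 F.hI2 hdet1.ne'
        ((pos_div_iff' (div_pos hW21 hdet1)).mpr (by linarith))
        ((pos_div_iff' (div_pos hX21 hdet1)).mpr (by linarith))
    · exact keyB ϱ l₁ l₂ β g f m M Y Z hϱ h1 hb F.hI3 F.hI4 hdet2.ne
        ((pos_div_iff' (div_pos_of_neg_of_neg hZ21 hdet2)).mpr (by linarith))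
        ((pos_div_iff' (div_pos_of_neg_of_neg hY21 hdet2)).mpr (by linarith))
    · rintro ⟨p, hp1, hp2⟩
      exact absurd (hp2.1.symm.trans hp1.1) (ne_of_lt F.hgf)
end

section
/- The following implications hold: (i) if k < λ₁·λ₂ < 2k, then λ₂ < 𝔪; (ii) if λ₁·(λ₂ − λ₁) > 2k, then λ₂ < 𝔐. Consequently, for any real β, if k < λ₁·λ₂ < 2k and 𝔪 < −β then λ₂ < −β, and if λ₁·(λ₂ − λ₁) > 2k and 𝔐 < −β then λ₂ < −β. -/
theorem stmt16 (k l₁ l₂ : ℝ) (hk : 0 < k) (h1 : 0 < l₁) (h12 : l₁ < l₂)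
    (hne : l₁ * l₂ ≠ k) (m M : ℝ)
    (hm : m = (k ^ 2 + k * l₂ * (l₂ - l₁) + l₁ ^ 2 * l₂ ^ 2) / ((l₁ * l₂ - k) * l₂))
    (hM : M = (k ^ 2 - k * l₁ * (l₂ - l₁) + l₁ ^ 2 * l₂ ^ 2) / ((l₁ * l₂ - k) * l₁)) :
    (k < l₁ * l₂ → l₁ * l₂ < 2 * k → l₂ < m) ∧
    (l₁ * (l₂ - l₁) > 2 * k → l₂ < M) ∧
    (∀ β : ℝ, k < l₁ * l₂ → l₁ * l₂ < 2 * k → m < -β → l₂ < -β) ∧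
    (∀ β : ℝ, l₁ * (l₂ - l₁) > 2 * k → M < -β → l₂ < -β) := by
  have h2 : 0 < l₂ := h1.trans h12
  have key1 : k < l₁ * l₂ → l₁ * l₂ < 2 * k → l₂ < m := by
    intro ha hb
    have hd : 0 < (l₁ * l₂ - k) * l₂ := mul_pos (by linarith) h2
    rw [hm, lt_div_iff₀ hd]
    nlinarith [mul_pos h2 h2, mul_pos (sub_pos.mpr hb) (mul_pos h2 h2)]
  have key2 : l₁ * (l₂ - l₁) > 2 * k → l₂ < M := by
    intro ha
    have hlt : k < l₁ * l₂ := by nlinarith [mul_pos h1 h1]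
    have hd : 0 < (l₁ * l₂ - k) * l₁ := mul_pos (by linarith) h1
    rw [hM, lt_div_iff₀ hd]
    nlinarith [mul_pos h1 h1, sq_nonneg k]
  exact ⟨key1, key2,
    fun β ha hb hc => (key1 ha hb).trans hc,
    fun β ha hc => (key2 ha).trans hc⟩
end

section
/- Let n₁ < n₂ be positive integers and write λ₁ = λ_{n₁}, λ₂ = λ_{n₂}. There exist nonzero reals α₁, α₂, γ₁, γ₂ such that u = α₁·e_{n₁} + α₂·e_{n₂} and v = γ₁·e_{n₁} + γ₂·e_{n₂} form a solution of the double-beam system with ∫₀¹ u'(s)² ds ≠ ∫₀¹ v'(s)² ds if and only if either (k < λ₁·λ₂ < 2k and 𝔪 < −β < 𝔐) or (λ₁·(λ₂ − λ₁) > 2k and 𝔐 < −β). Moreover, every such solution satisfies either (γ₁, γ₂) = (X·α₁, W·α₂) with (α₁, α₂) solving ϱα₁²λ₁ + ϱα₂²λ₂ + β = f and ϱα₁²λ₁X² + ϱα₂²λ₂W² + β = g, or (γ₁, γ₂) = (Y·α₁, Z·α₂) with (α₁, α₂) solving ϱα₁²λ₁ + ϱα₂²λ₂ + β = g and ϱα₁²λ₁Y²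 + ϱα₂²λ₂Z² + β = f. -/
open Real Set

lemma Icos (N : ℤ) : ∫ x in (0:ℝ)..1, Real.cos (N * Real.pi * x) = if N = 0 then 1 else 0 := by
  rcases eq_or_ne N 0 with h | h
  · simp [h]
  · simp only [h, if_false]
    have hc : ((N : ℝ) * Real.pi) ≠ 0 := by
      simp [Real.pi_ne_zero, Int.cast_eq_zero, h]
    have := intervalIntegral.integral_comp_mul_left (a := (0:ℝ)) (b := 1)
      (fun x => Real.cos x) hc
    simp only [mul_zero, mul_one] at this
    calc ∫ x in (0:ℝ)..1, Real.cos ((N:ℝ) * Real.pi * x)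
        = ((N:ℝ)*Real.pi)⁻¹ • ∫ x in (0:ℝ)..((N:ℝ)*Real.pi), Real.cos x := this
      _ = 0 := by rw [integral_cos]; simp [Real.sin_int_mul_pi]

lemma cont_cos_int (N : ℤ) : IntervalIntegrable (fun x => Real.cos ((N:ℝ) * Real.pi * x))
    MeasureTheory.volume 0 1 :=
  (Real.continuous_cos.comp (by continuity)).intervalIntegrable 0 1

lemma ortho_ee (m n : ℕ) (hm : 0 < m) (hn : 0 < n) :
    ∫ x in (0:ℝ)..1, ee m x * ee n x = if m = n then 1 else 0 := by
  have hpt : ∀ x : ℝ, ee m x * ee n x =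
      Real.cos ((((m:ℤ) - n : ℤ):ℝ) * Real.pi * x) - Real.cos ((((m:ℤ) + n : ℤ):ℝ) * Real.pi * x) := by
    intro x
    have h2 : Real.sqrt 2 * Real.sqrt 2 = 2 := Real.mul_self_sqrt (by norm_num)
    simp only [ee]
    push_cast
    rw [show ((m:ℝ) - n) * Real.pi * x = (m:ℝ)*Real.pi*x - (n:ℝ)*Real.pi*x by ring,
      show ((m:ℝ) + n) * Real.pi * x = (m:ℝ)*Real.pi*x + (n:ℝ)*Real.pi*x by ring,
      Real.cos_sub, Real.cos_add]
    linear_combination (Real.sin ((m:ℝ)*Real.pi*x) * Real.sin ((n:ℝ)*Real.pi*x)) * h2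
  rw [intervalIntegral.integral_congr (g := fun x =>
      Real.cos ((((m:ℤ) - n : ℤ):ℝ) * Real.pi * x) - Real.cos ((((m:ℤ) + n : ℤ):ℝ) * Real.pi * x))
      (fun x _ => hpt x),
    intervalIntegral.integral_sub (cont_cos_int _) (cont_cos_int _), Icos, Icos]
  have hmn : (m:ℤ) + n ≠ 0 := by positivity
  rcases eq_or_ne m n with h | h
  · simp [h, hmn, hn.ne']
  · have : (m:ℤ) - n ≠ 0 := sub_ne_zero.mpr (by exact_mod_cast h)
    simp [h, this, hmn]

lemma ortho_dee (m n : ℕ) (hm : 0 < m) (hn : 0 < n) :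
    ∫ x in (0:ℝ)..1, (Real.sqrt 2 * (m * Real.pi) * Real.cos (m * Real.pi * x)) *
      (Real.sqrt 2 * (n * Real.pi) * Real.cos (n * Real.pi * x)) = if m = n then lam m else 0 := by
  have hpt : ∀ x : ℝ, (Real.sqrt 2 * (m * Real.pi) * Real.cos (m * Real.pi * x)) *
      (Real.sqrt 2 * (n * Real.pi) * Real.cos (n * Real.pi * x)) =
      ((m:ℝ)*Real.pi*((n:ℝ)*Real.pi)) * (Real.cos ((((m:ℤ) - n : ℤ):ℝ) * Real.pi * x) +
        Real.cos ((((m:ℤ) + n : ℤ):ℝ) * Real.pi * x)) := by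
    intro x
    have h2 : Real.sqrt 2 * Real.sqrt 2 = 2 := Real.mul_self_sqrt (by norm_num)
    push_cast
    rw [show ((m:ℝ) - n) * Real.pi * x = (m:ℝ)*Real.pi*x - (n:ℝ)*Real.pi*x by ring,
      show ((m:ℝ) + n) * Real.pi * x = (m:ℝ)*Real.pi*x + (n:ℝ)*Real.pi*x by ring,
      Real.cos_sub, Real.cos_add]
    linear_combination ((m:ℝ)*Real.pi*Real.cos ((m:ℝ)*Real.pi*x)*((n:ℝ)*Real.pi)*Real.cos ((n:ℝ)*Real.pi*x)) * h2
  rw [intervalIntegral.integral_congr (g := fun x => ((m:ℝ)*Real.pi*((n:ℝ)*Real.pi)) *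
      (Real.cos ((((m:ℤ) - n : ℤ):ℝ) * Real.pi * x) + Real.cos ((((m:ℤ) + n : ℤ):ℝ) * Real.pi * x)))
      (fun x _ => hpt x),
    intervalIntegral.integral_const_mul,
    intervalIntegral.integral_add (cont_cos_int _) (cont_cos_int _), Icos, Icos]
  have hmn : (m:ℤ) + n ≠ 0 := by positivity
  rcases eq_or_ne m n with h | h
  · simp [h, hmn, hn.ne', lam]; ring
  · have : (m:ℤ) - n ≠ 0 := sub_ne_zero.mpr (by exact_mod_cast h)
    simp [h, this, hmn]
noncomputable def dee (n : ℕ) : ℝ → ℝ := fun x => Real.sqrt 2 * (n * Real.pi) * Real.cos (n * Real.pi * x)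

lemma hasDerivAt_ee (n : ℕ) (x : ℝ) : HasDerivAt (ee n) (dee n x) x := by
  have h1 : HasDerivAt (fun x : ℝ => (n : ℝ) * Real.pi * x) (n * Real.pi) x := by
    simpa using (hasDerivAt_id x).const_mul ((n : ℝ) * Real.pi)
  have := ((Real.hasDerivAt_sin ((n : ℝ) * Real.pi * x)).comp x h1).const_mul (Real.sqrt 2)
  refine this.congr_deriv ?_
  simp only [dee]; ring

lemma hasDerivAt_dee (n : ℕ) (x : ℝ) : HasDerivAt (dee n) (-(lam n) * ee n x) x := by
  have h1 : HasDerivAt (fun x : ℝ => (n : ℝ) * Real.pi * x) (n * Real.pi) x := by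
    simpa using (hasDerivAt_id x).const_mul ((n : ℝ) * Real.pi)
  have := ((Real.hasDerivAt_cos ((n : ℝ) * Real.pi * x)).comp x h1).const_mul
    (Real.sqrt 2 * ((n : ℝ) * Real.pi))
  refine this.congr_deriv ?_
  simp only [ee, lam]; ring

lemma contDiff_ee (n : ℕ) : ContDiff ℝ 4 (ee n) := by
  unfold ee
  exact contDiff_const.mul (Real.contDiff_sin.comp (contDiff_const.mul contDiff_id))

lemma deriv_combo (a b : ℝ) (m n : ℕ) :
    deriv (fun t => a * ee m t + b * ee n t) = fun x => a * dee m x + b * dee n x :=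
  funext fun x => (((hasDerivAt_ee m x).const_mul a).add ((hasDerivAt_ee n x).const_mul b)).deriv

lemma deriv_combo' (a b : ℝ) (m n : ℕ) :
    deriv (fun t => a * dee m t + b * dee n t) =
    fun x => (-(lam m) * a) * ee m x + (-(lam n) * b) * ee n x :=
  funext fun x => by
    have := (((hasDerivAt_dee m x).const_mul a).add ((hasDerivAt_dee n x).const_mul b)).deriv
    exact this.trans (by ring)

lemma id2_combo (a b : ℝ) (m n : ℕ) :
    iteratedDeriv 2 (fun t => a * ee m t + b * ee n t) =
    fun x => (-(lam m) * a) * ee m x + (-(lam n) * b) * ee n x := by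
  rw [iteratedDeriv_succ, iteratedDeriv_one, deriv_combo, deriv_combo']

lemma id4_combo (a b : ℝ) (m n : ℕ) :
    iteratedDeriv 4 (fun t => a * ee m t + b * ee n t) =
    fun x => (lam m ^ 2 * a) * ee m x + (lam n ^ 2 * b) * ee n x := by
  rw [show (4:ℕ) = 2+1+1 from rfl, iteratedDeriv_succ, iteratedDeriv_succ, id2_combo,
    deriv_combo, deriv_combo']
  funext x; ring

lemma cont_dee (n : ℕ) : Continuous (dee n) := by
  unfold dee; exact continuous_const.mul (Real.continuous_cos.comp (by continuity))

lemma cont_ee (n : ℕ) : Continuous (ee n) := by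
  unfold ee; exact continuous_const.mul (Real.continuous_sin.comp (by continuity))

lemma ortho_dee' (m n : ℕ) (hm : 0 < m) (hn : 0 < n) :
    ∫ x in (0:ℝ)..1, dee m x * dee n x = if m = n then lam m else 0 := ortho_dee m n hm hn

lemma intable (f g : ℝ → ℝ) (hf : Continuous f) (hg : Continuous g) :
    IntervalIntegrable (fun x => f x * g x) MeasureTheory.volume 0 1 :=
  (hf.mul hg).intervalIntegrable 0 1

lemma energy_combo (a b : ℝ) (m n : ℕ) (hm : 0 < m) (hn : 0 < n) (hmn : m ≠ n) :
    energy (fun t => a * ee m t + b * ee n t) = a ^ 2 * lam m + b ^ 2 * lam n := by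
  unfold energy
  rw [deriv_combo]
  have h : ∀ x ∈ uIcc (0:ℝ) 1, (fun x => (a * dee m x + b * dee n x) ^ 2) x =
      (fun x => a^2*(dee m x * dee m x) + ((2*a*b)*(dee m x * dee n x) +
        b^2*(dee n x * dee n x))) x := by
    intro x _; simp only; ring
  rw [intervalIntegral.integral_congr h,
    intervalIntegral.integral_add
      ((intable _ _ (cont_dee m) (cont_dee m)).const_mul _)
      (((intable _ _ (cont_dee m) (cont_dee n)).const_mul _).add
        ((intable _ _ (cont_dee n) (cont_dee n)).const_mul _)),
    intervalIntegral.integral_add ((intable _ _ (cont_dee m) (cont_dee n)).const_mul _)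
      ((intable _ _ (cont_dee n) (cont_dee n)).const_mul _),
    intervalIntegral.integral_const_mul, intervalIntegral.integral_const_mul,
    intervalIntegral.integral_const_mul, ortho_dee' m m hm hm, ortho_dee' m n hm hn,
    ortho_dee' n n hn hn]
  simp [hmn]

lemma extract (m n : ℕ) (hm : 0 < m) (hn : 0 < n) (hmn : m ≠ n) (A B : ℝ)
    (h : ∀ x ∈ Icc (0:ℝ) 1, A * ee m x + B * ee n x = 0) : A = 0 ∧ B = 0 := by
  have key : ∀ j : ℕ, 0 < j → ∫ x in (0:ℝ)..1, (A * ee m x + B * ee n x) * ee j x = 0 := by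
    intro j _
    have : ∀ x ∈ uIcc (0:ℝ) 1, (fun x => (A * ee m x + B * ee n x) * ee j x) x = (fun _ => (0:ℝ)) x := by
      intro x hx
      rw [uIcc_of_le zero_le_one] at hx
      simp [h x hx]
    rw [intervalIntegral.integral_congr this]
    simp
  have expand : ∀ j : ℕ, 0 < j → ∫ x in (0:ℝ)..1, (A * ee m x + B * ee n x) * ee j x =
      A * (∫ x in (0:ℝ)..1, ee m x * ee j x) + B * (∫ x in (0:ℝ)..1, ee n x * ee j x) := by
    intro j _
    rw [← intervalIntegral.integral_const_mul, ← intervalIntegral.integral_const_mul,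
      ← intervalIntegral.integral_add ((intable _ _ (cont_ee m) (cont_ee j)).const_mul _)
        ((intable _ _ (cont_ee n) (cont_ee j)).const_mul _)]
    congr 1; funext x; ring
  constructor
  · have := (key m hm).symm.trans (expand m hm)
    rw [ortho_ee m m hm hm, ortho_ee n m hn hm] at this
    simp [hmn, (Ne.symm hmn)] at this
    linarith [this]
  · have := (key n hn).symm.trans (expand n hn)
    rw [ortho_ee m n hm hn, ortho_ee n n hn hn] at this
    simp [hmn] at this
    linarith [this]

lemma ee_zero (n : ℕ) : ee n 0 = 0 := by simp [ee]
lemma ee_one (n : ℕ) : ee n 1 = 0 := by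
  simp [ee, Real.sin_nat_mul_pi]

lemma DBSol_iff (β ϱ k : ℝ) (m n : ℕ) (hm : 0 < m) (hn : 0 < n) (hmn : m ≠ n)
    (a₁ a₂ g₁ g₂ : ℝ) :
    DBSol β ϱ k (fun t => a₁ * ee m t + a₂ * ee n t) (fun t => g₁ * ee m t + g₂ * ee n t) ↔
    (a₁ * (lam m ^ 2 + (β + ϱ * (a₁^2 * lam m + a₂^2 * lam n)) * lam m + k) = k * g₁ ∧
     a₂ * (lam n ^ 2 + (β + ϱ * (a₁^2 * lam m + a₂^2 * lam n)) * lam n + k) = k * g₂ ∧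
     g₁ * (lam m ^ 2 + (β + ϱ * (g₁^2 * lam m + g₂^2 * lam n)) * lam m + k) = k * a₁ ∧
     g₂ * (lam n ^ 2 + (β + ϱ * (g₁^2 * lam m + g₂^2 * lam n)) * lam n + k) = k * a₂) := by
  have hEu := energy_combo a₁ a₂ m n hm hn hmn
  have hEv := energy_combo g₁ g₂ m n hm hn hmn
  constructor
  · rintro ⟨_, _, h1, h2, _⟩
    rw [id4_combo, id2_combo, hEu] at h1
    rw [id4_combo, id2_combo, hEv] at h2
    have e1 := extract m n hm hn hmn
      (a₁ * (lam m ^ 2 + (β + ϱ * (a₁^2 * lam m + a₂^2 * lam n)) * lam m + k) - k * g₁)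
      (a₂ * (lam n ^ 2 + (β + ϱ * (a₁^2 * lam m + a₂^2 * lam n)) * lam n + k) - k * g₂)
      (by intro x hx; have := h1 x hx; simp only at this ⊢; linear_combination this)
    have e2 := extract m n hm hn hmn
      (g₁ * (lam m ^ 2 + (β + ϱ * (g₁^2 * lam m + g₂^2 * lam n)) * lam m + k) - k * a₁)
      (g₂ * (lam n ^ 2 + (β + ϱ * (g₁^2 * lam m + g₂^2 * lam n)) * lam n + k) - k * a₂)
      (by intro x hx; have := h2 x hx; simp only at this ⊢; linear_combination this)
    exact ⟨by linarith [e1.1], by linarith [e1.2], by linarith [e2.1], by linarith [e2.2]⟩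
  · rintro ⟨q1, q2, q3, q4⟩
    refine ⟨(contDiff_const.mul (contDiff_ee m)).add (contDiff_const.mul (contDiff_ee n)),
      (contDiff_const.mul (contDiff_ee m)).add (contDiff_const.mul (contDiff_ee n)), ?_, ?_, ?_, ?_, ?_, ?_, ?_, ?_, ?_, ?_⟩
    · intro x hx
      rw [id4_combo, id2_combo, hEu]
      simp only
      linear_combination (ee m x) * q1 + (ee n x) * q2
    · intro x hx
      rw [id4_combo, id2_combo, hEv]
      simp only
      linear_combination (ee m x) * q3 + (ee n x) * q4
    · simp [ee_zero]
    · simp [ee_one]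
    · rw [id2_combo]; simp [ee_zero]
    · rw [id2_combo]; simp [ee_one]
    · simp [ee_zero]
    · simp [ee_one]
    · rw [id2_combo]; simp [ee_zero]
    · rw [id2_combo]; simp [ee_one]

lemma root_neg (Φ e : ℝ) (hΦ : Φ < -2) (he0 : 0 ≤ e) (he2 : e^2 = Φ^2 - 4) :
    -1 < (Φ + e)/2 ∧ (Φ + e)/2 < 0 := by
  constructor
  · nlinarith [sq_nonneg (e + Φ + 2)]
  · nlinarith [sq_nonneg (e + Φ)]

lemma root_pos (Φ e : ℝ) (hΦ : 2 < Φ) (he0 : 0 < e) : 1 < (Φ + e)/2 := by linarith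

lemma pos_aux (u v : ℝ) (h : 0 < u ^ 2 * v) : 0 < v := by
  by_contra hv
  push_neg at hv
  nlinarith [mul_nonneg (sq_nonneg u) (neg_nonneg.mpr hv)]

lemma sgnPP (u v : ℝ) (huv : 0 < u * v) (hu : 0 < u) : 0 < v := by
  by_contra hv
  push_neg at hv
  nlinarith [mul_nonneg hu.le (neg_nonneg.mpr hv)]

lemma sgnPN (u v : ℝ) (huv : u * v < 0) (hu : 0 < u) : v < 0 := by
  by_contra hv
  push_neg at hv
  nlinarith [mul_nonneg hu.le hv]

lemma sgnNP (u v : ℝ) (huv : u * v < 0) (hu : u < 0) : 0 < v := by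
  by_contra hv
  push_neg at hv
  nlinarith [mul_nonneg (neg_nonneg.mpr hu.le) (neg_nonneg.mpr hv)]

lemma sgnNN (u v : ℝ) (huv : 0 < u * v) (hu : u < 0) : v < 0 := by
  by_contra hv
  push_neg at hv
  nlinarith [mul_nonneg (neg_nonneg.mpr hu.le) hv]

lemma numpos (ζ σ : ℝ) (hζ1 : 1 < ζ) : 0 < (ζ + 1) + (ζ - 1) * σ ^ 2 := by
  nlinarith [mul_nonneg (by linarith : (0:ℝ) ≤ ζ - 1) (sq_nonneg σ)]

lemma numpos2 (ζ σ : ℝ) (hζ1 : 1 < ζ) (hσ2 : σ ^ 2 < 1) : 0 < (ζ + 1) - (ζ - 1) * σ ^ 2 := by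
  nlinarith [mul_nonneg (by linarith : (0:ℝ) ≤ ζ - 1) (by linarith : (0:ℝ) ≤ 1 - σ ^ 2)]

lemma sqlt (σ : ℝ) (h1 : -1 < σ) (h2 : σ < 1) : σ ^ 2 < 1 := by nlinarith

lemma phi4A (ζ σ Φ : ℝ) (hζ1 : 1 < ζ) (hσ2 : σ ^ 2 < 1)
    (hN : (σ * ζ) ^ 2 * (Φ ^ 2 - 4) = ((ζ - 1) ^ 2 * σ ^ 2 - (ζ + 1) ^ 2) * (σ ^ 2 - 1)) :
    4 < Φ ^ 2 := by
  have hf1 : (ζ - 1) ^ 2 * σ ^ 2 - (ζ + 1) ^ 2 < 0 := by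
    nlinarith [mul_nonneg (sq_nonneg (ζ - 1)) (by linarith : (0:ℝ) ≤ 1 - σ ^ 2)]
  have hP : 0 < ((ζ - 1) ^ 2 * σ ^ 2 - (ζ + 1) ^ 2) * (σ ^ 2 - 1) :=
    mul_pos_of_neg_of_neg hf1 (by linarith)
  have h0 : 0 < (σ * ζ) ^ 2 * (Φ ^ 2 - 4) := by rw [hN]; exact hP
  linarith [pos_aux _ _ h0]

lemma phi4B (ζ σ Φ : ℝ) (hζ1 : 1 < ζ) (hσ1 : σ < -1) (hkey : ζ + 1 < (ζ - 1) * (-σ))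
    (hN : (σ * ζ) ^ 2 * (Φ ^ 2 - 4) = ((ζ - 1) ^ 2 * σ ^ 2 - (ζ + 1) ^ 2) * (σ ^ 2 - 1)) :
    4 < Φ ^ 2 := by
  have hF1 : 0 < (ζ - 1) ^ 2 * σ ^ 2 - (ζ + 1) ^ 2 := by
    nlinarith [mul_pos (by linarith : (0:ℝ) < (ζ - 1) * (-σ) - (ζ + 1))
      (by linarith : (0:ℝ) < (ζ - 1) * (-σ) + (ζ + 1))]
  have hP : 0 < ((ζ - 1) ^ 2 * σ ^ 2 - (ζ + 1) ^ 2) * (σ ^ 2 - 1) :=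
    mul_pos hF1 (by nlinarith [mul_pos_of_neg_of_neg (by linarith : σ - 1 < 0) (by linarith : σ + 1 < 0)])
  have h0 : 0 < (σ * ζ) ^ 2 * (Φ ^ 2 - 4) := by rw [hN]; exact hP
  linarith [pos_aux _ _ h0]

lemma philt (Φ : ℝ) (h4 : 4 < Φ ^ 2) (hneg : Φ < 0) : Φ < -2 := by nlinarith

lemma phigt (Φ : ℝ) (h4 : 4 < Φ ^ 2) (hpos : 0 < Φ) : 2 < Φ := by nlinarith

lemma sigma_lt_X (ζ σ X Y : ℝ) (hζ : 0 < ζ) (h7 : ζ * ((σ - X) * (σ - Y)) = σ ^ 2 - 1)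
    (hσ2 : σ ^ 2 < 1) (hYX : Y < X) : σ < X := by
  have h6 : (σ - X) * (σ - Y) < 0 := by
    by_contra hcon
    push_neg at hcon
    nlinarith [mul_nonneg hζ.le hcon]
  by_contra hcon
  push_neg at hcon
  nlinarith [mul_nonneg (by linarith : (0:ℝ) ≤ σ - X) (by linarith : (0:ℝ) ≤ σ - Y)]

lemma num2neg (ζ σ : ℝ) (hζ1 : 1 < ζ) (hσ1 : σ < -1) (hkey : ζ + 1 < (ζ - 1) * (-σ)) :
    (ζ + 1) - (ζ - 1) * σ ^ 2 < 0 := by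
  have t1 : (ζ + 1) * (-σ) < ((ζ - 1) * (-σ)) * (-σ) :=
    mul_lt_mul_of_pos_right hkey (by linarith : (0:ℝ) < -σ)
  nlinarith [t1, mul_pos (show (0:ℝ) < ζ + 1 by linarith) (show (0:ℝ) < -σ - 1 by linarith)]

lemma tri_top (ζ σ Φ : ℝ) (hζ1 : 1 < ζ) (hσc : σ ≤ -1) (hΦ4 : 4 < Φ ^ 2)
    (hN : (σ * ζ) ^ 2 * (Φ ^ 2 - 4) = ((ζ - 1) ^ 2 * σ ^ 2 - (ζ + 1) ^ 2) * (σ ^ 2 - 1)) :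
    ζ + 1 < (ζ - 1) * (-σ) := by
  have h0 : 0 < (σ * ζ) ^ 2 * (Φ ^ 2 - 4) := by
    apply mul_pos _ (by linarith)
    have hσ0 : σ ≠ 0 := by intro h; rw [h] at hσc; linarith
    have hζ0 : ζ ≠ 0 := by linarith
    positivity
  rw [hN] at h0
  have hs : 0 ≤ σ ^ 2 - 1 := by nlinarith
  rcases eq_or_lt_of_le hs with heq | hlt
  · rw [← heq] at h0; simp at h0
  · have hF1 : 0 < (ζ - 1) ^ 2 * σ ^ 2 - (ζ + 1) ^ 2 := by
      by_contra hcon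
      push_neg at hcon
      nlinarith [mul_nonneg (neg_nonneg.mpr hcon) (le_of_lt hlt)]
    by_contra hcon
    push_neg at hcon
    have hu0 : (0:ℝ) ≤ (ζ - 1) * (-σ) := mul_nonneg (by linarith) (by linarith)
    nlinarith [mul_le_mul hcon hcon hu0 (by linarith : (0:ℝ) ≤ ζ + 1)]

lemma conv1 (p q k v : ℝ) (hp : 0 < p) (hq : 0 < q) (hk : 0 < k) (h2 : 0 < v)
    (htr : v = (q - p) * (p * q - k) - (q + p) * k) : 2 * k < p * (q - p) := by
  by_contra hcon
  push_neg at hcon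
  nlinarith [h2, mul_nonneg hq.le (by linarith : (0:ℝ) ≤ 2 * k - p * (q - p))]

lemma big_ineq (p q k : ℝ) (hq : 0 < q) (h1 : 2 * k < p * (q - p)) :
    0 < (q - p) * (p * q - k) - (q + p) * k := by
  nlinarith [mul_pos hq (by linarith : (0:ℝ) < p * (q - p) - 2 * k)]

lemma pq_big (p q k : ℝ) (h1 : 2 * k < p * (q - p)) : 2 * k < p * q := by
  nlinarith [sq_nonneg p]

lemma sig_lt_negone (p q k : ℝ) (hk : 0 < k) (h : 2 * k < p * q) : (k - p * q) / k < -1 := by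
  rw [div_lt_iff₀ hk]; linarith

lemma sig_le_negone (p q k : ℝ) (hk : 0 < k) (h : 2 * k ≤ p * q) : (k - p * q) / k ≤ -1 := by
  rw [div_le_iff₀ hk]; linarith

lemma sig_R1 (p q k : ℝ) (hk : 0 < k) (h1 : k < p * q) (h2 : p * q < 2 * k) :
    -1 < (k - p * q) / k ∧ (k - p * q) / k < 0 :=
  ⟨by rw [lt_div_iff₀ hk]; linarith, div_neg_of_neg_of_pos (by linarith) hk⟩

lemma sig_R3 (p q k : ℝ) (hp : 0 < p) (hq : 0 < q) (hk : 0 < k) (h1 : p * q < k) :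
    0 < (k - p * q) / k ∧ (k - p * q) / k < 1 :=
  ⟨div_pos (by linarith) hk, by rw [div_lt_one hk]; nlinarith [mul_pos hp hq]⟩

lemma quad_disc (r Φ : ℝ) (h : r ^ 2 - Φ * r + 1 = 0) : 4 ≤ Φ ^ 2 := by
  nlinarith [sq_nonneg (2 * r - Φ)]

lemma contra3 (β m M : ℝ) (h1 : 0 < -β - m) (h2 : -β - M < 0) (h3 : M - m < 0) : False := by
  linarith

lemma bnd_sq1 (X W : ℝ) (h1 : -1 < X) (h2 : X < W) (h3 : W < 0) :
    0 < X ^ 2 - W ^ 2 ∧ 0 < 1 - W ^ 2 ∧ X ^ 2 - 1 < 0 := by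
  refine ⟨?_, ?_, ?_⟩
  · nlinarith [mul_pos_of_neg_of_neg (by linarith : X - W < 0) (by linarith : X + W < 0)]
  · nlinarith [mul_pos (by linarith : (0:ℝ) < 1 - W) (by linarith : (0:ℝ) < 1 + W)]
  · nlinarith [mul_pos (by linarith : (0:ℝ) < 1 - X) (by linarith : (0:ℝ) < 1 + X)]

lemma bnd_sq2 (X W : ℝ) (h1 : -1 < X) (h2 : X < 0) (h3 : 1 < W) :
    X ^ 2 - W ^ 2 < 0 ∧ 1 - W ^ 2 < 0 ∧ X ^ 2 - 1 < 0 := by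
  refine ⟨?_, ?_, ?_⟩
  · nlinarith [mul_pos (by linarith : (0:ℝ) < 1 - X) (by linarith : (0:ℝ) < 1 + X),
      mul_pos (by linarith : (0:ℝ) < W - 1) (by linarith : (0:ℝ) < W + 1)]
  · nlinarith [mul_pos (by linarith : (0:ℝ) < W - 1) (by linarith : (0:ℝ) < W + 1)]
  · nlinarith [mul_pos (by linarith : (0:ℝ) < 1 - X) (by linarith : (0:ℝ) < 1 + X)]

lemma bnd_sq3 (X W : ℝ) (h1 : 1 < X) (h2 : X < W) :
    X ^ 2 - W ^ 2 < 0 ∧ 1 - W ^ 2 < 0 ∧ 0 < X ^ 2 - 1 := by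
  refine ⟨?_, ?_, ?_⟩
  · nlinarith [mul_pos (by linarith : (0:ℝ) < W - X) (by linarith : (0:ℝ) < W + X)]
  · nlinarith [mul_pos (by linarith : (0:ℝ) < W - 1) (by linarith : (0:ℝ) < W + 1)]
  · nlinarith [mul_pos (by linarith : (0:ℝ) < X - 1) (by linarith : (0:ℝ) < X + 1)]

lemma WgtX (ζ σ X W : ℝ) (hζ1 : 1 < ζ) (hσX : σ < X) (hWmX : W - X = (ζ - 1) * (X - σ)) :
    X < W := by
  nlinarith [mul_pos (by linarith : (0:ℝ) < ζ - 1) (by linarith : (0:ℝ) < X - σ)]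
lemma packR1 (ζ σ Φ Ψ X Y W e s2 : ℝ) (hζ1 : 1 < ζ) (hσa : -1 < σ) (hσb : σ < 0)
    (hN : (σ * ζ) ^ 2 * (Φ ^ 2 - 4) = ((ζ - 1) ^ 2 * σ ^ 2 - (ζ + 1) ^ 2) * (σ ^ 2 - 1))
    (hΨ4 : Ψ ^ 2 - 4 = ζ ^ 2 * (Φ ^ 2 - 4))
    (hXe : X = (Φ + e)/2) (hYe : Y = (Φ - e)/2) (hWe : W = (Ψ + s2)/2)
    (he0 : 0 ≤ e) (hs20 : 0 ≤ s2)
    (he2c : 4 ≤ Φ ^ 2 → e ^ 2 = Φ ^ 2 - 4) (hs22c : 4 ≤ Ψ ^ 2 → s2 ^ 2 = Ψ ^ 2 - 4)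
    (hΦden : Φ * (σ * ζ) = (ζ + 1) + (ζ - 1) * σ ^ 2)
    (hΨden : Ψ * σ = (ζ + 1) - (ζ - 1) * σ ^ 2)
    (hsgc : 4 ≤ Φ ^ 2 → ζ * ((σ - X) * (σ - Y)) = σ ^ 2 - 1)
    (hWX : W = ζ * X - σ * (ζ - 1)) :
    4 < Φ ^ 2 ∧ 0 < X ^ 2 - W ^ 2 ∧ 0 < 1 - W ^ 2 ∧ X ^ 2 - 1 < 0 ∧ X < 0 ∧ W < 0 := by
  have hζp : (0:ℝ) < ζ := by linarith
  have hσ2 := sqlt σ hσa (by linarith)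
  have hΦ4 := phi4A ζ σ Φ hζ1 hσ2 hN
  have hΦneg : Φ < 0 := by
    have h1 : 0 < σ * ζ * Φ := by
      rw [mul_comm]; rw [hΦden]; exact numpos ζ σ hζ1
    exact sgnNN _ _ h1 (mul_neg_of_neg_of_pos hσb hζp)
  have hΦ2 := philt Φ hΦ4 hΦneg
  have he2 := he2c hΦ4.le
  have heps : 0 < e := lt_of_le_of_ne he0 (by
    intro h
    rw [← h] at he2
    norm_num at he2
    nlinarith)
  have hXb := root_neg Φ e hΦ2 he0 he2
  rw [← hXe] at hXb
  have hΨ4' : 0 < Ψ ^ 2 - 4 := by rw [hΨ4]; exact mul_pos (by positivity) (by linarith)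
  have hΨneg : Ψ < 0 := by
    have h1 : 0 < σ * Ψ := by rw [mul_comm, hΨden]; exact numpos2 ζ σ hζ1 hσ2
    exact sgnNN _ _ h1 hσb
  have hΨ2 := philt Ψ (by linarith) hΨneg
  have hs22 := hs22c (by linarith)
  have hWb := root_neg Ψ s2 hΨ2 hs20 hs22
  rw [← hWe] at hWb
  have hYX : Y < X := by rw [hXe, hYe]; linarith
  have hσX := sigma_lt_X ζ σ X Y hζp (hsgc hΦ4.le) hσ2 hYX
  have hXW := WgtX ζ σ X W hζ1 hσX (by linear_combination hWX)
  obtain ⟨c1, c2, c3⟩ := bnd_sq1 X W hXb.1 hXW hWb.2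
  exact ⟨hΦ4, c1, c2, c3, hXb.2, hWb.2⟩

lemma packR2 (ζ σ Φ Ψ X Y W e s2 : ℝ) (hζ1 : 1 < ζ) (hσ1 : σ < -1)
    (hkey : ζ + 1 < (ζ - 1) * (-σ))
    (hN : (σ * ζ) ^ 2 * (Φ ^ 2 - 4) = ((ζ - 1) ^ 2 * σ ^ 2 - (ζ + 1) ^ 2) * (σ ^ 2 - 1))
    (hΨ4 : Ψ ^ 2 - 4 = ζ ^ 2 * (Φ ^ 2 - 4))
    (hXe : X = (Φ + e)/2) (hYe : Y = (Φ - e)/2) (hWe : W = (Ψ + s2)/2)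
    (he0 : 0 ≤ e) (hs20 : 0 ≤ s2)
    (he2c : 4 ≤ Φ ^ 2 → e ^ 2 = Φ ^ 2 - 4) (hs22c : 4 ≤ Ψ ^ 2 → s2 ^ 2 = Ψ ^ 2 - 4)
    (hΦden : Φ * (σ * ζ) = (ζ + 1) + (ζ - 1) * σ ^ 2)
    (hΨden : Ψ * σ = (ζ + 1) - (ζ - 1) * σ ^ 2) :
    4 < Φ ^ 2 ∧ X ^ 2 - W ^ 2 < 0 ∧ 1 - W ^ 2 < 0 ∧ X ^ 2 - 1 < 0 ∧ X < 0 ∧ 1 < W := by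
  have hζp : (0:ℝ) < ζ := by linarith
  have hΦ4 := phi4B ζ σ Φ hζ1 hσ1 hkey hN
  have hΦneg : Φ < 0 := by
    have h1 : 0 < σ * ζ * Φ := by
      rw [mul_comm]; rw [hΦden]; exact numpos ζ σ hζ1
    exact sgnNN _ _ h1 (mul_neg_of_neg_of_pos (by linarith) hζp)
  have hΦ2 := philt Φ hΦ4 hΦneg
  have he2 := he2c hΦ4.le
  have heps : 0 < e := lt_of_le_of_ne he0 (by
    intro h
    rw [← h] at he2
    norm_num at he2
    nlinarith)
  have hXb := root_neg Φ e hΦ2 he0 he2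
  rw [← hXe] at hXb
  have hΨ4' : 0 < Ψ ^ 2 - 4 := by rw [hΨ4]; exact mul_pos (by positivity) (by linarith)
  have hΨpos : 0 < Ψ := by
    have h1 : σ * Ψ < 0 := by
      rw [mul_comm, hΨden]; exact num2neg ζ σ hζ1 hσ1 hkey
    exact sgnNP _ _ h1 (by linarith)
  have hΨ2 := phigt Ψ (by linarith) hΨpos
  have hs22 := hs22c (by linarith)
  have hs2p : 0 < s2 := lt_of_le_of_ne hs20 (by
    intro h
    rw [← h] at hs22
    norm_num at hs22
    linarith)
  have hWb : 1 < W := by rw [hWe]; exact root_pos Ψ s2 hΨ2 hs2p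
  obtain ⟨c1, c2, c3⟩ := bnd_sq2 X W hXb.1 hXb.2 hWb
  exact ⟨hΦ4, c1, c2, c3, hXb.2, hWb⟩

lemma packR3 (ζ σ Φ Ψ X Y W e s2 : ℝ) (hζ1 : 1 < ζ) (hσa : 0 < σ) (hσb : σ < 1)
    (hN : (σ * ζ) ^ 2 * (Φ ^ 2 - 4) = ((ζ - 1) ^ 2 * σ ^ 2 - (ζ + 1) ^ 2) * (σ ^ 2 - 1))
    (hΨ4 : Ψ ^ 2 - 4 = ζ ^ 2 * (Φ ^ 2 - 4))
    (hXe : X = (Φ + e)/2) (hYe : Y = (Φ - e)/2) (hWe : W = (Ψ + s2)/2)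
    (he0 : 0 ≤ e) (hs20 : 0 ≤ s2)
    (he2c : 4 ≤ Φ ^ 2 → e ^ 2 = Φ ^ 2 - 4)
    (hΦden : Φ * (σ * ζ) = (ζ + 1) + (ζ - 1) * σ ^ 2)
    (hsgc : 4 ≤ Φ ^ 2 → ζ * ((σ - X) * (σ - Y)) = σ ^ 2 - 1)
    (hWX : W = ζ * X - σ * (ζ - 1)) :
    4 < Φ ^ 2 ∧ X ^ 2 - W ^ 2 < 0 ∧ 1 - W ^ 2 < 0 ∧ 0 < X ^ 2 - 1 := by
  have hζp : (0:ℝ) < ζ := by linarith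
  have hσ2 := sqlt σ (by linarith) hσb
  have hΦ4 := phi4A ζ σ Φ hζ1 hσ2 hN
  have hΦpos : 0 < Φ := by
    have h1 : 0 < σ * ζ * Φ := by
      rw [mul_comm]; rw [hΦden]; exact numpos ζ σ hζ1
    exact sgnPP _ _ h1 (mul_pos hσa hζp)
  have hΦ2 := phigt Φ hΦ4 hΦpos
  have he2 := he2c hΦ4.le
  have heps : 0 < e := lt_of_le_of_ne he0 (by
    intro h
    rw [← h] at he2
    norm_num at he2
    nlinarith)
  have hXb : 1 < X := by rw [hXe]; exact root_pos Φ e hΦ2 heps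
  have hYX : Y < X := by rw [hXe, hYe]; linarith
  have hσX := sigma_lt_X ζ σ X Y hζp (hsgc hΦ4.le) hσ2 hYX
  have hXW := WgtX ζ σ X W hζ1 hσX (by linear_combination hWX)
  obtain ⟨c1, c2, c3⟩ := bnd_sq3 X W hXb hXW
  exact ⟨hΦ4, c1, c2, c3⟩
set_option maxHeartbeats 2000000 in
lemma key (p q k β ϱ : ℝ) (hϱ : 0 < ϱ) (hk : 0 < k) (hp : 0 < p) (hpq : p < q)
    (hne : p * q ≠ k)
    (ζ σ Φ Ψ X Y W Z f g m M : ℝ)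
    (hζ : ζ = q / p) (hσ : σ = (k - p * q) / k)
    (hΦ : Φ = ((ζ + 1) + (ζ - 1) * σ ^ 2) / (σ * ζ))
    (hΨ : Ψ = ((ζ + 1) - (ζ - 1) * σ ^ 2) / σ)
    (hX : X = (Φ + Real.sqrt (Φ ^ 2 - 4)) / 2)
    (hY : Y = (Φ - Real.sqrt (Φ ^ 2 - 4)) / 2)
    (hW : W = (Ψ + Real.sqrt (Ψ ^ 2 - 4)) / 2)
    (hZ : Z = (Ψ - Real.sqrt (Ψ ^ 2 - 4)) / 2)
    (hf : f = (k * X - p ^ 2 - k) / p)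
    (hg : g = (k * Y - p ^ 2 - k) / p)
    (hm : m = (k ^ 2 + k * q * (q - p) + p ^ 2 * q ^ 2) / ((p * q - k) * q))
    (hM : M = (k ^ 2 - k * p * (q - p) + p ^ 2 * q ^ 2) / ((p * q - k) * p)) :
    ((∃ α₁ α₂ γ₁ γ₂ : ℝ, α₁ ≠ 0 ∧ α₂ ≠ 0 ∧ γ₁ ≠ 0 ∧ γ₂ ≠ 0 ∧
        (α₁ * (p ^ 2 + (β + ϱ * (α₁^2 * p + α₂^2 * q)) * p + k) = k * γ₁ ∧
         α₂ * (q ^ 2 + (β + ϱ * (α₁^2 * p + α₂^2 * q)) * q + k) = k * γ₂ ∧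
         γ₁ * (p ^ 2 + (β + ϱ * (γ₁^2 * p + γ₂^2 * q)) * p + k) = k * α₁ ∧
         γ₂ * (q ^ 2 + (β + ϱ * (γ₁^2 * p + γ₂^2 * q)) * q + k) = k * α₂) ∧
        α₁^2 * p + α₂^2 * q ≠ γ₁^2 * p + γ₂^2 * q) ↔
      ((k < p * q ∧ p * q < 2 * k ∧ m < -β ∧ -β < M) ∨
       (p * (q - p) > 2 * k ∧ M < -β))) ∧
    (∀ α₁ α₂ γ₁ γ₂ : ℝ, α₁ ≠ 0 → α₂ ≠ 0 → γ₁ ≠ 0 → γ₂ ≠ 0 →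
        (α₁ * (p ^ 2 + (β + ϱ * (α₁^2 * p + α₂^2 * q)) * p + k) = k * γ₁ ∧
         α₂ * (q ^ 2 + (β + ϱ * (α₁^2 * p + α₂^2 * q)) * q + k) = k * γ₂ ∧
         γ₁ * (p ^ 2 + (β + ϱ * (γ₁^2 * p + γ₂^2 * q)) * p + k) = k * α₁ ∧
         γ₂ * (q ^ 2 + (β + ϱ * (γ₁^2 * p + γ₂^2 * q)) * q + k) = k * α₂) →
        α₁^2 * p + α₂^2 * q ≠ γ₁^2 * p + γ₂^2 * q →
      ((γ₁ = X * α₁ ∧ γ₂ = W * α₂ ∧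
          ϱ * α₁ ^ 2 * p + ϱ * α₂ ^ 2 * q + β = f ∧
          ϱ * α₁ ^ 2 * p * X ^ 2 + ϱ * α₂ ^ 2 * q * W ^ 2 + β = g) ∨
       (γ₁ = Y * α₁ ∧ γ₂ = Z * α₂ ∧
          ϱ * α₁ ^ 2 * p + ϱ * α₂ ^ 2 * q + β = g ∧
          ϱ * α₁ ^ 2 * p * Y ^ 2 + ϱ * α₂ ^ 2 * q * Z ^ 2 + β = f))) := by
  have hp0 : p ≠ 0 := hp.ne'
  have hq : 0 < q := hp.trans hpq
  have hq0 : q ≠ 0 := hq.ne'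
  have hk0 : k ≠ 0 := hk.ne'
  have hD0 : p * q - k ≠ 0 := sub_ne_zero.mpr hne
  have hD0' : k - p * q ≠ 0 := fun h => hne ((sub_eq_zero.mp h).symm)
  have hσ0 : σ ≠ 0 := by rw [hσ]; exact div_ne_zero hD0' hk0
  have hζ1 : 1 < ζ := by rw [hζ]; exact (one_lt_div hp).mpr hpq
  have hζ0 : ζ ≠ 0 := by positivity
  have hΨΦ : Ψ = ζ * Φ - 2 * σ * (ζ - 1) := by rw [hΨ, hΦ]; field_simp; ring
  have hΨ4 : Ψ ^ 2 - 4 = ζ ^ 2 * (Φ ^ 2 - 4) := by rw [hΨΦ, hΦ]; field_simp; ring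
  have hsqrt : Real.sqrt (Ψ ^ 2 - 4) = ζ * Real.sqrt (Φ ^ 2 - 4) := by
    rw [hΨ4, Real.sqrt_mul (sq_nonneg ζ), Real.sqrt_sq (by positivity : (0:ℝ) ≤ ζ)]
  have hWX : W = ζ * X - σ * (ζ - 1) := by rw [hW, hX, hsqrt, hΨΦ]; ring
  have hZY : Z = ζ * Y - σ * (ζ - 1) := by rw [hZ, hY, hsqrt, hΨΦ]; ring
  have hpf : p * f = k * X - p ^ 2 - k := by rw [hf]; field_simp
  have hpg : p * g = k * Y - p ^ 2 - k := by rw [hg]; field_simp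
  have hfW : q * f + q ^ 2 + k = k * W := by rw [hf, hWX, hζ, hσ]; field_simp; ring
  have hgZ : q * g + q ^ 2 + k = k * Z := by rw [hg, hZY, hζ, hσ]; field_simp; ring
  have hMf : p * M = p ^ 2 + k - k * Φ := by rw [hM, hΦ, hζ, hσ]; field_simp; ring
  have hmf : q * m = q ^ 2 + k - k * Ψ := by rw [hm, hΨ, hζ, hσ]; field_simp; rw [show k - q * p = -(q * p - k) by ring, div_neg]; field_simp; ring
  have hMm : (p * q) * (M - m) = (q - p) * (p * q - k) := by rw [hm, hM]; field_simp; ring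
  have hN : (σ * ζ) ^ 2 * (Φ ^ 2 - 4) = ((ζ - 1) ^ 2 * σ ^ 2 - (ζ + 1) ^ 2) * (σ ^ 2 - 1) := by
    rw [hΦ]; field_simp; ring
  have hΦden : Φ * (σ * ζ) = (ζ + 1) + (ζ - 1) * σ ^ 2 := by rw [hΦ]; field_simp
  have hΨden : Ψ * σ = (ζ + 1) - (ζ - 1) * σ ^ 2 := by rw [hΨ]; field_simp
  have hsig : ζ * (σ ^ 2 - Φ * σ + 1) = σ ^ 2 - 1 := by rw [hΦ]; field_simp; ring
  have hXaY : X + Y = Φ := by rw [hX, hY]; ring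
  have hWaZ : W + Z = Ψ := by rw [hW, hZ]; ring
  set e : ℝ := Real.sqrt (Φ ^ 2 - 4) with hedef
  set s2 : ℝ := Real.sqrt (Ψ ^ 2 - 4) with hs2def
  have hXe : X = (Φ + e)/2 := hX
  have hYe : Y = (Φ - e)/2 := hY
  have hWe : W = (Ψ + s2)/2 := hW
  have he0 : 0 ≤ e := Real.sqrt_nonneg _
  have hs20 : 0 ≤ s2 := Real.sqrt_nonneg _
  have he2c : 4 ≤ Φ ^ 2 → e ^ 2 = Φ ^ 2 - 4 := fun h4 => Real.sq_sqrt (sub_nonneg.mpr h4)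
  have hs22c : 4 ≤ Ψ ^ 2 → s2 ^ 2 = Ψ ^ 2 - 4 := fun h4 => Real.sq_sqrt (sub_nonneg.mpr h4)
  have hroots : 4 ≤ Φ ^ 2 → (e ^ 2 = Φ ^ 2 - 4 ∧ X * Y = 1 ∧ W * Z = 1 ∧
      X ^ 2 = Φ * X - 1 ∧ W ^ 2 = Ψ * W - 1) := by
    intro h4
    have he2 : e ^ 2 = Φ ^ 2 - 4 := he2c h4
    have hXY : X * Y = 1 := by
      rw [hXe, hYe]; linear_combination (-(1:ℝ)/4) * he2
    have h5 : 0 ≤ Ψ ^ 2 - 4 := by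
      rw [hΨ4]; exact mul_nonneg (sq_nonneg ζ) (sub_nonneg.mpr h4)
    have hΨ44 : 4 ≤ Ψ ^ 2 := sub_nonneg.mp h5
    have hs22 : s2 ^ 2 = Ψ ^ 2 - 4 := hs22c hΨ44
    have hWZ : W * Z = 1 := by
      rw [hWe, hZ]; linear_combination (-(1:ℝ)/4) * hs22
    have hX2 : X ^ 2 = Φ * X - 1 := by linear_combination X * hXaY - hXY
    have hW2 : W ^ 2 = Ψ * W - 1 := by linear_combination W * hWaZ - hWZ
    exact ⟨he2, hXY, hWZ, hX2, hW2⟩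
  have hI : 4 ≤ Φ ^ 2 → ((1 - W^2) * m = W^2 * f - g ∧ (X^2 - 1) * M = g - X^2 * f) := by
    intro h4
    obtain ⟨he2, hXY, hWZ, hX2, hW2⟩ := hroots h4
    constructor
    · have hq' : q * ((1 - W^2) * m - (W^2 * f - g)) = 0 := by
        linear_combination (1 - W^2) * hmf - W^2 * hfW + hgZ - k*W*hW2 + k*hWaZ
      rcases mul_eq_zero.mp hq' with h | h
      · exact absurd h hq0
      · linear_combination h
    · have hp' : p * ((X^2 - 1) * M - (g - X^2 * f)) = 0 := by
        linear_combination (X^2 - 1) * hMf - hpg + X^2 * hpf + k*X*hX2 - k*hXaY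
      rcases mul_eq_zero.mp hp' with h | h
      · exact absurd h hp0
      · linear_combination h
  have hsgc : 4 ≤ Φ ^ 2 → ζ * ((σ - X) * (σ - Y)) = σ ^ 2 - 1 := by
    intro h4
    obtain ⟨_, hXY, _, _, _⟩ := hroots h4
    linear_combination hsig - ζ * σ * hXaY + ζ * hXY
  have htrid : ((ζ - 1) * (-σ) - (ζ + 1)) * (p * k) = (q - p) * (p * q - k) - (q + p) * k := by
    rw [hζ, hσ]; field_simp; ring
  have hW6 : k * p * W = k * q * X + (p * q - k) * (q - p) := by
    rw [hWX, hζ, hσ]; field_simp; ring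
  have hZ6 : k * p * Z = k * q * Y + (p * q - k) * (q - p) := by
    rw [hZY, hζ, hσ]; field_simp; ring
  have hΦD : Φ * (k * q * ((q - p) * (p * q - k))) =
      -((((q - p) * (p * q - k)) ^ 2 + k ^ 2 * (q ^ 2 - p ^ 2))) := by
    rw [hΦ, hζ, hσ]; field_simp; rw [show k - q * p = -(q * p - k) by ring, div_neg, mul_div_cancel_right₀ _ (by rwa [mul_comm q p] : q * p - k ≠ 0)]; ring
  have hkqD : k * q * ((q - p) * (p * q - k)) ≠ 0 :=
    mul_ne_zero (mul_ne_zero hk0 hq0) (mul_ne_zero (sub_ne_zero.mpr hpq.ne') hD0)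
  -- forward workhorse
  have fwd : ∀ α₁ α₂ γ₁ γ₂ : ℝ, α₁ ≠ 0 → α₂ ≠ 0 → γ₁ ≠ 0 → γ₂ ≠ 0 →
      (α₁ * (p ^ 2 + (β + ϱ * (α₁^2 * p + α₂^2 * q)) * p + k) = k * γ₁) →
      (α₂ * (q ^ 2 + (β + ϱ * (α₁^2 * p + α₂^2 * q)) * q + k) = k * γ₂) →
      (γ₁ * (p ^ 2 + (β + ϱ * (γ₁^2 * p + γ₂^2 * q)) * p + k) = k * α₁) →
      (γ₂ * (q ^ 2 + (β + ϱ * (γ₁^2 * p + γ₂^2 * q)) * q + k) = k * α₂) →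
      α₁^2 * p + α₂^2 * q ≠ γ₁^2 * p + γ₂^2 * q →
      (((k < p * q ∧ p * q < 2 * k ∧ m < -β ∧ -β < M) ∨
        (p * (q - p) > 2 * k ∧ M < -β)) ∧
       ((γ₁ = X * α₁ ∧ γ₂ = W * α₂ ∧
          ϱ * α₁ ^ 2 * p + ϱ * α₂ ^ 2 * q + β = f ∧
          ϱ * α₁ ^ 2 * p * X ^ 2 + ϱ * α₂ ^ 2 * q * W ^ 2 + β = g) ∨
        (γ₁ = Y * α₁ ∧ γ₂ = Z * α₂ ∧
          ϱ * α₁ ^ 2 * p + ϱ * α₂ ^ 2 * q + β = g ∧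
          ϱ * α₁ ^ 2 * p * Y ^ 2 + ϱ * α₂ ^ 2 * q * Z ^ 2 + β = f))) := by
    intro α₁ α₂ γ₁ γ₂ hα₁ hα₂ hγ₁ hγ₂ e1 e2 e3 e4 hneq
    set c : ℝ := β + ϱ * (α₁^2 * p + α₂^2 * q) with hc
    set d : ℝ := β + ϱ * (γ₁^2 * p + γ₂^2 * q) with hd
    have hcd : c ≠ d := fun h => hneq (mul_left_cancel₀ hϱ.ne' (by linear_combination h))
    set r₁ : ℝ := γ₁ / α₁ with hr₁def
    set r₂ : ℝ := γ₂ / α₂ with hr₂def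
    have hγ₁e : γ₁ = r₁ * α₁ := by rw [hr₁def]; field_simp
    have hγ₂e : γ₂ = r₂ * α₂ := by rw [hr₂def]; field_simp
    have hr₁0 : r₁ ≠ 0 := by rw [hr₁def]; exact div_ne_zero hγ₁ hα₁
    have hr₁ : p ^ 2 + c * p + k = k * r₁ := by
      apply mul_left_cancel₀ hα₁
      linear_combination e1 + k * hγ₁e
    have hr₂ : q ^ 2 + c * q + k = k * r₂ := by
      apply mul_left_cancel₀ hα₂
      linear_combination e2 + k * hγ₂e
    have hr₁' : r₁ * (p ^ 2 + d * p + k) = k := by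
      apply mul_left_cancel₀ hα₁
      have h := e3
      rw [hγ₁e] at h
      linear_combination h
    have hr₂' : r₂ * (q ^ 2 + d * q + k) = k := by
      apply mul_left_cancel₀ hα₂
      have h := e4
      rw [hγ₂e] at h
      linear_combination h
    have hL1 : k * q * r₁ - k * p * r₂ = (p - q) * (p * q - k) := by
      linear_combination p * hr₂ - q * hr₁
    have hL2 : k * q * r₂ - k * p * r₁ = (p - q) * (p * q - k) * (r₁ * r₂) := by
      linear_combination (p * r₁) * hr₂' - (q * r₂) * hr₁'
    have hT : k * q * ((q - p) * (p * q - k)) * (r₁ ^ 2 + 1) +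
        (((q - p) * (p * q - k)) ^ 2 + k ^ 2 * (q ^ 2 - p ^ 2)) * r₁ = 0 := by
      linear_combination (k * p) * hL2 + (k * q + (q - p) * (p * q - k) * r₁) * hL1
    have hquad : r₁ ^ 2 - Φ * r₁ + 1 = 0 := by
      apply mul_left_cancel₀ hkqD
      rw [mul_zero]
      linear_combination hT - r₁ * hΦD
    have hΦ4 : 4 ≤ Φ ^ 2 := quad_disc r₁ Φ hquad
    have hΦ4' : 4 < Φ ^ 2 := by
      rcases eq_or_lt_of_le hΦ4 with heq | h
      · exfalso
        have hsq0 : (2 * r₁ - Φ) ^ 2 = 0 := by linear_combination 4 * hquad - heq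
        have hr2Φ : 2 * r₁ = Φ := by linear_combination sq_eq_zero_iff.mp hsq0
        have hr₁sq : r₁ ^ 2 = 1 := by
          linear_combination ((2 * r₁ + Φ) / 4) * hr2Φ - (1 / 4) * heq
        apply hcd
        have h9 : p * r₁ * (c - d) = 0 := by
          linear_combination r₁ * hr₁ - hr₁' + k * hr₁sq
        rcases mul_eq_zero.mp h9 with h10 | h10
        · rcases mul_eq_zero.mp h10 with h11 | h11
          · exact absurd h11 hp0
          · exact absurd h11 hr₁0
        · exact sub_eq_zero.mp h10
      · exact h
    obtain ⟨he2, hXY, hWZ, hX2, hW2⟩ := hroots hΦ4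
    obtain ⟨I1, I2⟩ := hI hΦ4
    have hX0 : X ≠ 0 := left_ne_zero_of_mul_eq_one hXY
    have hY0 : Y ≠ 0 := right_ne_zero_of_mul_eq_one hXY
    have hroot : (r₁ - X) * (r₁ - Y) = 0 := by
      linear_combination hquad - r₁ * hXaY + hXY
    have main : ∃ A B : ℝ, 0 < A ∧ 0 < B ∧ A + B = f + -β ∧
        X ^ 2 * A + W ^ 2 * B = g + -β ∧
        ((γ₁ = X * α₁ ∧ γ₂ = W * α₂ ∧
          ϱ * α₁ ^ 2 * p + ϱ * α₂ ^ 2 * q + β = f ∧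
          ϱ * α₁ ^ 2 * p * X ^ 2 + ϱ * α₂ ^ 2 * q * W ^ 2 + β = g) ∨
        (γ₁ = Y * α₁ ∧ γ₂ = Z * α₂ ∧
          ϱ * α₁ ^ 2 * p + ϱ * α₂ ^ 2 * q + β = g ∧
          ϱ * α₁ ^ 2 * p * Y ^ 2 + ϱ * α₂ ^ 2 * q * Z ^ 2 + β = f)) := by
      have hα₁sq : 0 < α₁ ^ 2 := lt_of_le_of_ne (sq_nonneg _) (Ne.symm (pow_ne_zero 2 hα₁))
      have hα₂sq : 0 < α₂ ^ 2 := lt_of_le_of_ne (sq_nonneg _) (Ne.symm (pow_ne_zero 2 hα₂))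
      have hγ₁sq : 0 < γ₁ ^ 2 := lt_of_le_of_ne (sq_nonneg _) (Ne.symm (pow_ne_zero 2 hγ₁))
      have hγ₂sq : 0 < γ₂ ^ 2 := lt_of_le_of_ne (sq_nonneg _) (Ne.symm (pow_ne_zero 2 hγ₂))
      rcases mul_eq_zero.mp hroot with hrX | hrY
      · have hrX : r₁ = X := by linear_combination hrX
        have hcf : c = f := by
          apply mul_left_cancel₀ hp0
          linear_combination hr₁ + k * hrX - hpf
        have hr₂W : r₂ = W := by
          have h6 : k * p * r₂ = k * p * W := by
            linear_combination (-1 : ℝ) * hL1 + k * q * hrX - hW6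
          exact mul_left_cancel₀ (mul_ne_zero hk0 hp0) h6
        have hdg : d = g := by
          have h7 : X * (p * (d - g)) = 0 := by
            linear_combination hr₁' - (p ^ 2 + d * p + k) * hrX - X * hpg - k * hXY
          rcases mul_eq_zero.mp h7 with h8 | h8
          · exact absurd h8 hX0
          · rcases mul_eq_zero.mp h8 with h9 | h9
            · exact absurd h9 hp0
            · exact sub_eq_zero.mp h9
        have hγ₁X : γ₁ = X * α₁ := by rw [hγ₁e, hrX]
        have hγ₂W : γ₂ = W * α₂ := by rw [hγ₂e, hr₂W]
        have h1 : γ₁ ^ 2 = X ^ 2 * α₁ ^ 2 := by rw [hγ₁X]; ring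
        have h2 : γ₂ ^ 2 = W ^ 2 * α₂ ^ 2 := by rw [hγ₂W]; ring
        refine ⟨ϱ * (α₁ ^ 2 * p), ϱ * (α₂ ^ 2 * q), by positivity, by positivity, ?_, ?_, ?_⟩
        · linear_combination hcf - hc
        · linear_combination hdg - hd - ϱ * p * h1 - ϱ * q * h2
        · exact Or.inl ⟨hγ₁X, hγ₂W, by linear_combination hcf - hc,
            by linear_combination hdg - hd - ϱ * p * h1 - ϱ * q * h2⟩
      · have hrY : r₁ = Y := by linear_combination hrY
        have hcg : c = g := by
          apply mul_left_cancel₀ hp0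
          linear_combination hr₁ + k * hrY - hpg
        have hr₂Z : r₂ = Z := by
          have h6 : k * p * r₂ = k * p * Z := by
            linear_combination (-1 : ℝ) * hL1 + k * q * hrY - hZ6
          exact mul_left_cancel₀ (mul_ne_zero hk0 hp0) h6
        have hdf : d = f := by
          have hYX' : Y * X = 1 := by linear_combination hXY
          have h7 : Y * (p * (d - f)) = 0 := by
            linear_combination hr₁' - (p ^ 2 + d * p + k) * hrY - Y * hpf - k * hYX'
          rcases mul_eq_zero.mp h7 with h8 | h8
          · exact absurd h8 hY0
          · rcases mul_eq_zero.mp h8 with h9 | h9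
            · exact absurd h9 hp0
            · exact sub_eq_zero.mp h9
        have hγ₁Y : γ₁ = Y * α₁ := by rw [hγ₁e, hrY]
        have hγ₂Z : γ₂ = Z * α₂ := by rw [hγ₂e, hr₂Z]
        have h1 : X ^ 2 * γ₁ ^ 2 = α₁ ^ 2 := by
          rw [hγ₁Y]; linear_combination ((X * Y + 1) * α₁ ^ 2) * hXY
        have h2 : W ^ 2 * γ₂ ^ 2 = α₂ ^ 2 := by
          rw [hγ₂Z]; linear_combination ((W * Z + 1) * α₂ ^ 2) * hWZ
        have h1' : γ₁ ^ 2 = Y ^ 2 * α₁ ^ 2 := by rw [hγ₁Y]; ring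
        have h2' : γ₂ ^ 2 = Z ^ 2 * α₂ ^ 2 := by rw [hγ₂Z]; ring
        refine ⟨ϱ * (γ₁ ^ 2 * p), ϱ * (γ₂ ^ 2 * q), by positivity, by positivity, ?_, ?_, ?_⟩
        · linear_combination hdf - hd
        · linear_combination hcg - hc + ϱ * p * h1 + ϱ * q * h2
        · exact Or.inr ⟨hγ₁Y, hγ₂Z, by linear_combination hcg - hc,
            by linear_combination hdf - hd - ϱ * p * h1' - ϱ * q * h2'⟩
    obtain ⟨A, B, hApos, hBpos, hA, hB, hclass⟩ := main
    refine ⟨?_, hclass⟩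
    have FA : A * (X ^ 2 - W ^ 2) = (1 - W ^ 2) * (-β - m) := by
      linear_combination hB - W ^ 2 * hA + I1
    have FB : B * (X ^ 2 - W ^ 2) = (X ^ 2 - 1) * (-β - M) := by
      linear_combination X ^ 2 * hA - hB + I2
    rcases lt_trichotomy (p * q) k with hlt | heqk | hgt
    · exfalso
      have hσp := sig_R3 p q k hp hq hk hlt
      have hσa : 0 < σ := by rw [hσ]; exact hσp.1
      have hσb : σ < 1 := by rw [hσ]; exact hσp.2
      obtain ⟨hΦ4x, s1, s2n, s3x⟩ := packR3 ζ σ Φ Ψ X Y W e s2 hζ1 hσa hσb hN hΨ4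
        hXe hYe hWe he0 hs20 he2c hΦden hsgc hWX
      have u1 : (1 - W ^ 2) * (-β - m) < 0 := by
        rw [← FA]; exact mul_neg_of_pos_of_neg hApos s1
      have hm1 : 0 < -β - m := sgnNP _ _ u1 s2n
      have u2 : (X ^ 2 - 1) * (-β - M) < 0 := by
        rw [← FB]; exact mul_neg_of_pos_of_neg hBpos s1
      have hM1 : -β - M < 0 := sgnPN _ _ u2 s3x
      have u3 : (p * q) * (M - m) < 0 := by
        rw [hMm]; exact mul_neg_of_pos_of_neg (sub_pos.mpr hpq) (sub_neg.mpr hlt)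
      have hMmlt : M - m < 0 := sgnPN _ _ u3 (mul_pos hp hq)
      exact contra3 β m M hm1 hM1 hMmlt
    · exact absurd heqk hne
    · rcases lt_or_ge (p * q) (2 * k) with h2k | h2k
      · have hσp := sig_R1 p q k hk hgt h2k
        have hσa : -1 < σ := by rw [hσ]; exact hσp.1
        have hσb : σ < 0 := by rw [hσ]; exact hσp.2
        obtain ⟨hΦ4x, s1, s2p, s3, _, _⟩ := packR1 ζ σ Φ Ψ X Y W e s2 hζ1 hσa hσb hN hΨ4
          hXe hYe hWe he0 hs20 he2c hs22c hΦden hΨden hsgc hWX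
        left
        have u1 : 0 < (1 - W ^ 2) * (-β - m) := by
          rw [← FA]; exact mul_pos hApos s1
        have u2 : 0 < (X ^ 2 - 1) * (-β - M) := by
          rw [← FB]; exact mul_pos hBpos s1
        exact ⟨hgt, h2k, sub_pos.mp (sgnPP _ _ u1 s2p),
          sub_neg.mp (sgnNN _ _ u2 s3)⟩
      · right
        have hσc : σ ≤ -1 := by rw [hσ]; exact sig_le_negone p q k hk h2k
        have hkey := tri_top ζ σ Φ hζ1 hσc hΦ4' hN
        have hv : 0 < ((ζ - 1) * (-σ) - (ζ + 1)) * (p * k) :=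
          mul_pos (sub_pos.mpr hkey) (mul_pos hp hk)
        have hbig : 2 * k < p * (q - p) := conv1 p q k _ hp hq hk hv htrid
        have hσ1 : σ < -1 := by rw [hσ]; exact sig_lt_negone p q k hk (pq_big p q k hbig)
        obtain ⟨hΦ4x, s1, s2n, s3, _, _⟩ := packR2 ζ σ Φ Ψ X Y W e s2 hζ1 hσ1 hkey hN hΨ4
          hXe hYe hWe he0 hs20 he2c hs22c hΦden hΨden
        have u2 : (X ^ 2 - 1) * (-β - M) < 0 := by
          rw [← FB]; exact mul_neg_of_pos_of_neg hBpos s1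
        exact ⟨hbig, sub_pos.mp (sgnNP _ _ u2 s3)⟩
  -- backward construction
  have construct : ∀ a b : ℝ, 0 < a → 0 < b → X ^ 2 - W ^ 2 ≠ 0 → X ≠ 0 → W ≠ 0 →
      4 ≤ Φ ^ 2 → 0 < e →
      a * (X ^ 2 - W ^ 2) = (1 - W ^ 2) * (-β - m) →
      b * (X ^ 2 - W ^ 2) = (X ^ 2 - 1) * (-β - M) →
      (∃ α₁ α₂ γ₁ γ₂ : ℝ, α₁ ≠ 0 ∧ α₂ ≠ 0 ∧ γ₁ ≠ 0 ∧ γ₂ ≠ 0 ∧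
        (α₁ * (p ^ 2 + (β + ϱ * (α₁^2 * p + α₂^2 * q)) * p + k) = k * γ₁ ∧
         α₂ * (q ^ 2 + (β + ϱ * (α₁^2 * p + α₂^2 * q)) * q + k) = k * γ₂ ∧
         γ₁ * (p ^ 2 + (β + ϱ * (γ₁^2 * p + γ₂^2 * q)) * p + k) = k * α₁ ∧
         γ₂ * (q ^ 2 + (β + ϱ * (γ₁^2 * p + γ₂^2 * q)) * q + k) = k * α₂) ∧
        α₁^2 * p + α₂^2 * q ≠ γ₁^2 * p + γ₂^2 * q) := by
    intro a b ha hb hXWne hX0 hW0 h4 heps haX hbX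
    obtain ⟨he2, hXY, hWZ, hX2, hW2⟩ := hroots h4
    obtain ⟨I1, I2⟩ := hI h4
    have hsum : a + b = f + -β := by
      apply mul_right_cancel₀ hXWne
      linear_combination haX + hbX - I1 - I2
    have hsum2 : X ^ 2 * a + W ^ 2 * b = g + -β := by
      apply mul_right_cancel₀ hXWne
      linear_combination X ^ 2 * haX + W ^ 2 * hbX - X ^ 2 * I1 - W ^ 2 * I2
    have hd1 : 0 < a / (ϱ * p) := div_pos ha (mul_pos hϱ hp)
    have hd2 : 0 < b / (ϱ * q) := div_pos hb (mul_pos hϱ hq)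
    set α₁ : ℝ := Real.sqrt (a / (ϱ * p)) with hα₁def
    set α₂ : ℝ := Real.sqrt (b / (ϱ * q)) with hα₂def
    have hα₁pos : 0 < α₁ := Real.sqrt_pos.mpr hd1
    have hα₂pos : 0 < α₂ := Real.sqrt_pos.mpr hd2
    have hα₁sq : ϱ * p * α₁ ^ 2 = a := by
      rw [hα₁def, Real.sq_sqrt hd1.le]
      field_simp
    have hα₂sq : ϱ * q * α₂ ^ 2 = b := by
      rw [hα₂def, Real.sq_sqrt hd2.le]
      field_simp
    have hcf : β + ϱ * (α₁^2 * p + α₂^2 * q) = f := by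
      linear_combination hα₁sq + hα₂sq + hsum
    have hdg : β + ϱ * ((X * α₁)^2 * p + (W * α₂)^2 * q) = g := by
      linear_combination X ^ 2 * hα₁sq + W ^ 2 * hα₂sq + hsum2
    refine ⟨α₁, α₂, X * α₁, W * α₂, ne_of_gt hα₁pos, ne_of_gt hα₂pos,
      mul_ne_zero hX0 (ne_of_gt hα₁pos), mul_ne_zero hW0 (ne_of_gt hα₂pos),
      ⟨?_, ?_, ?_, ?_⟩, ?_⟩
    · linear_combination (α₁ * p) * hcf + α₁ * hpf
    · linear_combination (α₂ * q) * hcf + α₂ * hfW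
    · linear_combination (X * α₁ * p) * hdg + (X * α₁) * hpg + k * α₁ * hXY
    · linear_combination (W * α₂ * q) * hdg + (W * α₂) * hgZ + k * α₂ * hWZ
    · intro hcontra
      have hfg : f = g := by
        linear_combination hdg - hcf + ϱ * hcontra
      have hXYe : X - Y = e := by rw [hXe, hYe]; ring
      have hpe : p * (f - g) = k * e := by linear_combination hpf - hpg + k * hXYe
      have hzero : k * e = 0 := by rw [← hpe, hfg]; ring
      exact absurd hzero (ne_of_gt (mul_pos hk heps))
  constructor
  · constructor
    · rintro ⟨α₁, α₂, γ₁, γ₂, h1, h2, h3, h4, ⟨e1, e2, e3, e4⟩, hne'⟩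
      exact (fwd α₁ α₂ γ₁ γ₂ h1 h2 h3 h4 e1 e2 e3 e4 hne').1
    · rintro (⟨hgt, h2k, hm1, hM1⟩ | ⟨h2kp, hM2⟩)
      · have hσp := sig_R1 p q k hk hgt h2k
        have hσa : -1 < σ := by rw [hσ]; exact hσp.1
        have hσb : σ < 0 := by rw [hσ]; exact hσp.2
        obtain ⟨hΦ4x, s1, s2p, s3, hXneg, hWneg⟩ := packR1 ζ σ Φ Ψ X Y W e s2 hζ1 hσa hσb hN hΨ4
          hXe hYe hWe he0 hs20 he2c hs22c hΦden hΨden hsgc hWX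
        have heps : 0 < e := Real.sqrt_pos.mpr (sub_pos.mpr hΦ4x)
        have hXWne : X ^ 2 - W ^ 2 ≠ 0 := ne_of_gt s1
        refine construct ((1 - W ^ 2) * (-β - m) / (X ^ 2 - W ^ 2))
          ((X ^ 2 - 1) * (-β - M) / (X ^ 2 - W ^ 2)) ?_ ?_ hXWne (ne_of_lt hXneg)
          (ne_of_lt hWneg) hΦ4x.le heps ?_ ?_
        · exact div_pos (mul_pos s2p (sub_pos.mpr hm1)) s1
        · exact div_pos (mul_pos_of_neg_of_neg s3 (sub_neg.mpr hM1)) s1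
        · exact div_mul_cancel₀ _ hXWne
        · exact div_mul_cancel₀ _ hXWne
      · have hpq2 : 2 * k < p * q := pq_big p q k h2kp
        have hσ1 : σ < -1 := by rw [hσ]; exact sig_lt_negone p q k hk hpq2
        have h2 := big_ineq p q k hq h2kp
        have h3 : 0 < ((ζ - 1) * (-σ) - (ζ + 1)) * (p * k) := by rw [htrid]; exact h2
        have hkey : ζ + 1 < (ζ - 1) * (-σ) := by
          have h3' : 0 < (p * k) * ((ζ - 1) * (-σ) - (ζ + 1)) := by
            rw [mul_comm]; exact h3
          exact sub_pos.mp (sgnPP _ _ h3' (mul_pos hp hk))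
        obtain ⟨hΦ4x, s1, s2n, s3, hXneg, hWgt⟩ := packR2 ζ σ Φ Ψ X Y W e s2 hζ1 hσ1 hkey hN hΨ4
          hXe hYe hWe he0 hs20 he2c hs22c hΦden hΨden
        have heps : 0 < e := Real.sqrt_pos.mpr (sub_pos.mpr hΦ4x)
        have hXWne : X ^ 2 - W ^ 2 ≠ 0 := ne_of_lt s1
        have hkpq : k < p * q := lt_trans (lt_two_mul_self hk) hpq2
        have u3 : 0 < (p * q) * (M - m) := by
          rw [hMm]; exact mul_pos (sub_pos.mpr hpq) (sub_pos.mpr hkpq)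
        have hmM : m < M := sub_pos.mp (sgnPP _ _ u3 (mul_pos hp hq))
        have hm1 : m < -β := lt_trans hmM hM2
        refine construct ((1 - W ^ 2) * (-β - m) / (X ^ 2 - W ^ 2))
          ((X ^ 2 - 1) * (-β - M) / (X ^ 2 - W ^ 2)) ?_ ?_ hXWne (ne_of_lt hXneg)
          (ne_of_gt (lt_trans zero_lt_one hWgt)) hΦ4x.le heps ?_ ?_
        · exact div_pos_iff.mpr (Or.inr ⟨mul_neg_of_neg_of_pos s2n (sub_pos.mpr hm1), s1⟩)
        · exact div_pos_iff.mpr (Or.inr ⟨mul_neg_of_neg_of_pos s3 (sub_pos.mpr hM2), s1⟩)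
        · exact div_mul_cancel₀ _ hXWne
        · exact div_mul_cancel₀ _ hXWne
  · intro α₁ α₂ γ₁ γ₂ h1 h2 h3 h4 heqs hne'
    exact (fwd α₁ α₂ γ₁ γ₂ h1 h2 h3 h4 heqs.1 heqs.2.1 heqs.2.2.1 heqs.2.2.2 hne').2

theorem stmt17 (β ϱ k : ℝ) (hϱ : 0 < ϱ) (hk : 0 < k)
    (n₁ n₂ : ℕ) (hn₁ : 0 < n₁) (hlt : n₁ < n₂)
    (l₁ l₂ : ℝ) (hl₁ : l₁ = lam n₁) (hl₂ : l₂ = lam n₂) (hne : l₁ * l₂ ≠ k)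
    (ζ σ Φ Ψ X Y W Z f g m M : ℝ)
    (hζ : ζ = l₂ / l₁) (hσ : σ = (k - l₁ * l₂) / k)
    (hΦ : Φ = ((ζ + 1) + (ζ - 1) * σ ^ 2) / (σ * ζ))
    (hΨ : Ψ = ((ζ + 1) - (ζ - 1) * σ ^ 2) / σ)
    (hX : X = (Φ + Real.sqrt (Φ ^ 2 - 4)) / 2)
    (hY : Y = (Φ - Real.sqrt (Φ ^ 2 - 4)) / 2)
    (hW : W = (Ψ + Real.sqrt (Ψ ^ 2 - 4)) / 2)
    (hZ : Z = (Ψ - Real.sqrt (Ψ ^ 2 - 4)) / 2)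
    (hf : f = (k * X - l₁ ^ 2 - k) / l₁)
    (hg : g = (k * Y - l₁ ^ 2 - k) / l₁)
    (hm : m = (k ^ 2 + k * l₂ * (l₂ - l₁) + l₁ ^ 2 * l₂ ^ 2) / ((l₁ * l₂ - k) * l₂))
    (hM : M = (k ^ 2 - k * l₁ * (l₂ - l₁) + l₁ ^ 2 * l₂ ^ 2) / ((l₁ * l₂ - k) * l₁)) :
    ((∃ α₁ α₂ γ₁ γ₂ : ℝ, α₁ ≠ 0 ∧ α₂ ≠ 0 ∧ γ₁ ≠ 0 ∧ γ₂ ≠ 0 ∧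
        DBSol β ϱ k (fun t => α₁ * ee n₁ t + α₂ * ee n₂ t)
          (fun t => γ₁ * ee n₁ t + γ₂ * ee n₂ t) ∧
        energy (fun t => α₁ * ee n₁ t + α₂ * ee n₂ t) ≠
          energy (fun t => γ₁ * ee n₁ t + γ₂ * ee n₂ t)) ↔
      ((k < l₁ * l₂ ∧ l₁ * l₂ < 2 * k ∧ m < -β ∧ -β < M) ∨
       (l₁ * (l₂ - l₁) > 2 * k ∧ M < -β))) ∧
    (∀ α₁ α₂ γ₁ γ₂ : ℝ, α₁ ≠ 0 → α₂ ≠ 0 → γ₁ ≠ 0 → γ₂ ≠ 0 →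
      DBSol β ϱ k (fun t => α₁ * ee n₁ t + α₂ * ee n₂ t)
        (fun t => γ₁ * ee n₁ t + γ₂ * ee n₂ t) →
      energy (fun t => α₁ * ee n₁ t + α₂ * ee n₂ t) ≠
        energy (fun t => γ₁ * ee n₁ t + γ₂ * ee n₂ t) →
      ((γ₁ = X * α₁ ∧ γ₂ = W * α₂ ∧
          ϱ * α₁ ^ 2 * l₁ + ϱ * α₂ ^ 2 * l₂ + β = f ∧
          ϱ * α₁ ^ 2 * l₁ * X ^ 2 + ϱ * α₂ ^ 2 * l₂ * W ^ 2 + β = g) ∨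
       (γ₁ = Y * α₁ ∧ γ₂ = Z * α₂ ∧
          ϱ * α₁ ^ 2 * l₁ + ϱ * α₂ ^ 2 * l₂ + β = g ∧
          ϱ * α₁ ^ 2 * l₁ * Y ^ 2 + ϱ * α₂ ^ 2 * l₂ * Z ^ 2 + β = f))) := by
  have hn₂ : 0 < n₂ := hn₁.trans hlt
  have hmn : n₁ ≠ n₂ := Nat.ne_of_lt hlt
  have hπ : 0 < Real.pi := Real.pi_pos
  have hn₁R : (0:ℝ) < (n₁:ℝ) := by exact_mod_cast hn₁
  have hnR : (n₁:ℝ) < (n₂:ℝ) := by exact_mod_cast hlt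
  have hp : 0 < l₁ := by rw [hl₁]; unfold lam; positivity
  have hpq : l₁ < l₂ := by
    rw [hl₁, hl₂]; unfold lam
    have h2 : (0:ℝ) < Real.pi ^ 2 := by positivity
    have h3 : (n₁:ℝ) ^ 2 < (n₂:ℝ) ^ 2 := by nlinarith [hn₁R, hnR]
    exact mul_lt_mul_of_pos_right h3 h2
  obtain ⟨part1, part2⟩ := key l₁ l₂ k β ϱ hϱ hk hp hpq hne ζ σ Φ Ψ X Y W Z f g m M
    hζ hσ hΦ hΨ hX hY hW hZ hf hg hm hM
  have hEq : ∀ a b : ℝ, energy (fun t => a * ee n₁ t + b * ee n₂ t) =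
      a ^ 2 * l₁ + b ^ 2 * l₂ := by
    intro a b
    rw [energy_combo a b n₁ n₂ hn₁ hn₂ hmn, hl₁, hl₂]
  have hSol : ∀ a₁ a₂ g₁ g₂ : ℝ,
      DBSol β ϱ k (fun t => a₁ * ee n₁ t + a₂ * ee n₂ t)
        (fun t => g₁ * ee n₁ t + g₂ * ee n₂ t) ↔
      (a₁ * (l₁ ^ 2 + (β + ϱ * (a₁^2 * l₁ + a₂^2 * l₂)) * l₁ + k) = k * g₁ ∧
       a₂ * (l₂ ^ 2 + (β + ϱ * (a₁^2 * l₁ + a₂^2 * l₂)) * l₂ + k) = k * g₂ ∧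
       g₁ * (l₁ ^ 2 + (β + ϱ * (g₁^2 * l₁ + g₂^2 * l₂)) * l₁ + k) = k * a₁ ∧
       g₂ * (l₂ ^ 2 + (β + ϱ * (g₁^2 * l₁ + g₂^2 * l₂)) * l₂ + k) = k * a₂) := by
    intro a₁ a₂ g₁ g₂
    rw [DBSol_iff β ϱ k n₁ n₂ hn₁ hn₂ hmn a₁ a₂ g₁ g₂, hl₁, hl₂]
  have hEne : ∀ a₁ a₂ g₁ g₂ : ℝ,
      (energy (fun t => a₁ * ee n₁ t + a₂ * ee n₂ t) ≠
        energy (fun t => g₁ * ee n₁ t + g₂ * ee n₂ t)) ↔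
      (a₁^2 * l₁ + a₂^2 * l₂ ≠ g₁^2 * l₁ + g₂^2 * l₂) := by
    intro a₁ a₂ g₁ g₂
    rw [hEq, hEq]
  constructor
  · rw [← part1]
    constructor
    · rintro ⟨α₁, α₂, γ₁, γ₂, h1, h2, h3, h4, hsol, hene⟩
      exact ⟨α₁, α₂, γ₁, γ₂, h1, h2, h3, h4, (hSol _ _ _ _).mp hsol,
        (hEne _ _ _ _).mp hene⟩
    · rintro ⟨α₁, α₂, γ₁, γ₂, h1, h2, h3, h4, heqs, hene⟩
      exact ⟨α₁, α₂, γ₁, γ₂, h1, h2, h3, h4, (hSol _ _ _ _).mpr heqs,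
        (hEne _ _ _ _).mpr hene⟩
  · intro α₁ α₂ γ₁ γ₂ h1 h2 h3 h4 hsol hene
    exact part2 α₁ α₂ γ₁ γ₂ h1 h2 h3 h4 ((hSol _ _ _ _).mp hsol) ((hEne _ _ _ _).mp hene)
end
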